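/- arXiv:1109.0399 — 4 statements merged into one kernel-verified Lean document; each statement's English description precedes it below -/
import Mathlib

section
/- Let n = 5 and let w = (15) be the transposition of S_5 exchanging 1 and 5. Then the tangent cone C_w of the Schubert variety of w at the origin equals the set of x ∈ n_- satisfying the five equations x_{42} x_{31} − x_{41} x_{32} = 0, x_{52} x_{41} − x_{51} x_{42} = 0, x_{53} x_{42} − x_{52} x_{43} = 0, x_{52} x_{31} − x_{51} x_{32} = 0, and x_{53} x_{41} − x_{51} x_{43} = 0. -/
open Matrix MvPolynomial

/-- Evaluation of a polynomial in the matrix-entry variables at a matrix. -/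
noncomputable def evalMat {K : Type} [Field K] {n : ℕ}
    (m : Matrix (Fin n) (Fin n) K) (f : MvPolynomial (Fin n × Fin n) K) : K :=
  MvPolynomial.eval (fun p => m p.1 p.2) f

/-- Zariski closure of a set of matrices: the zero locus of its vanishing ideal. -/
def zClosure {K : Type} [Field K] {n : ℕ} (S : Set (Matrix (Fin n) (Fin n) K)) :
    Set (Matrix (Fin n) (Fin n) K) :=
  {m | ∀ f : MvPolynomial (Fin n × Fin n) K,
      (∀ s ∈ S, evalMat s f = 0) → evalMat m f = 0}

/-- The group `B` of invertible upper triangular matrices. -/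
def upperB (K : Type) [Field K] (n : ℕ) : Set (Matrix (Fin n) (Fin n) K) :=
  {b | IsUnit b ∧ ∀ i j : Fin n, j < i → b i j = 0}

/-- The permutation matrix of `w`. -/
def permMat (K : Type) [Field K] {n : ℕ} (w : Equiv.Perm (Fin n)) :
    Matrix (Fin n) (Fin n) K :=
  Matrix.of fun i j => if w j = i then 1 else 0

/-- The space `n₋` of strictly lower triangular matrices. -/
def lowerNil (K : Type) [Field K] (n : ℕ) : Set (Matrix (Fin n) (Fin n) K) :=
  {x | ∀ i j : Fin n, i ≤ j → x i j = 0}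

/-- The Bruhat double coset `B ŵ B`. -/
def bruhatCell {K : Type} [Field K] {n : ℕ} (w : Equiv.Perm (Fin n)) :
    Set (Matrix (Fin n) (Fin n) K) :=
  {m | ∃ b₁ ∈ upperB K n, ∃ b₂ ∈ upperB K n, m = b₁ * permMat K w * b₂}

/-- The affine part `Ω_w` of the Schubert variety of `w`. -/
def schubertAffine {K : Type} [Field K] {n : ℕ} (w : Equiv.Perm (Fin n)) :
    Set (Matrix (Fin n) (Fin n) K) :=
  {x ∈ lowerNil K n | (1 + x) ∈ zClosure (bruhatCell w)}

/-- The tangent cone `C_w` at the origin: the common zeroes in `n₋` of the lowest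
forms of all nonzero polynomials in the vanishing ideal of `Ω_w`.  (A nonzero `f`
has a unique `d` such that all homogeneous components below `d` vanish while the
component in degree `d` is nonzero; that component is the lowest form `f₀`.) -/
def tangentCone {K : Type} [Field K] {n : ℕ} (w : Equiv.Perm (Fin n)) :
    Set (Matrix (Fin n) (Fin n) K) :=
  {x ∈ lowerNil K n | ∀ f : MvPolynomial (Fin n × Fin n) K,
      (∀ s ∈ schubertAffine w, evalMat s f = 0) →
      ∀ d : ℕ, (∀ e < d, MvPolynomial.homogeneousComponent e f = 0) →
        MvPolynomial.homogeneousComponent d f ≠ 0 →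
        evalMat x (MvPolynomial.homogeneousComponent d f) = 0}

set_option linter.unusedSectionVars false
set_option linter.unusedVariables false
section Scratch
variable {K : Type} [Field K] [CharZero K]

def mk5 {R : Type*} [CommRing R] (a21 a31 a32 a41 a42 a43 a51 a52 a53 a54 : R) :
    Matrix (Fin 5) (Fin 5) R :=
  !![1,0,0,0,0; a21,1,0,0,0; a31,a32,1,0,0; a41,a42,a43,1,0; a51,a52,a53,a54,1]

lemma permMat5 : permMat K (Equiv.swap (0 : Fin 5) 4) =
    !![0,0,0,0,1; 0,1,0,0,0; 0,0,1,0,0; 0,0,0,1,0; 1,0,0,0,0] := by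
  ext i j
  fin_cases i <;> fin_cases j <;>
    simp [permMat, Equiv.swap_apply_def, Matrix.vecHead, Matrix.vecTail]

/-- membership in `upperB` for an explicit upper triangular matrix with
nonzero diagonal product -/
lemma mem_upperB_of (b : Matrix (Fin 5) (Fin 5) K)
    (htri : b.BlockTriangular id) (hd : ∏ i, b i i ≠ 0) : b ∈ upperB K 5 := by
  refine ⟨(Matrix.isUnit_iff_isUnit_det b).mpr ?_, fun i j h => htri h⟩
  rw [Matrix.det_of_upperTriangular htri]
  exact hd.isUnit

set_option maxHeartbeats 1600000 in
lemma genMem (e l3 l4 u1 u2 u3 u4 : K) (hu1 : u1 ≠ 0) (hU : u1 - e*u2 ≠ 0)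
    (hD3 : 1 - l3*u3 ≠ 0) (hD4 : 1 - l4*u4 ≠ 0) :
    mk5 e (l3*u1) (l3*u2) (l4*u1) (l4*u2) (l4*u3) u1 u2 u3 u4 ∈
      bruhatCell (K := K) (Equiv.swap (0 : Fin 5) 4) := by
  have key : (!![-(1-l3*u3)*(1-l4*u4)*(u1-e*u2), -u2*(1-l3*u3)*(1-l4*u4), -u3*(1-l4*u4), -u4, 1;
       0, u1, 0, 0, -e;
       0, 0, 1, 0, -l3;
       0, 0, 0, 1, -l4;
       0, 0, 0, 0, 1] : Matrix (Fin 5) (Fin 5) K) *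
       (mk5 e (l3*u1) (l3*u2) (l4*u1) (l4*u2) (l4*u3) u1 u2 u3 u4) =
      permMat K (Equiv.swap (0 : Fin 5) 4) *
      !![u1, u2, u3, u4, 1;
       0, u1-e*u2, -e*u3, -e*u4, -e;
       0, 0, 1-l3*u3, -l3*u4, -l3;
       0, 0, 0, 1-l4*u4, -l4;
       0, 0, 0, 0, 1] := by
    rw [permMat5]
    ext i j
    fin_cases i <;> fin_cases j <;>
      simp [mk5, Matrix.mul_apply, Fin.sum_univ_five, Matrix.vecHead, Matrix.vecTail] <;> ring
  have hbtri : Matrix.BlockTriangular (!![-(1-l3*u3)*(1-l4*u4)*(u1-e*u2), -u2*(1-l3*u3)*(1-l4*u4), -u3*(1-l4*u4), -u4, 1;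
       0, u1, 0, 0, -e;
       0, 0, 1, 0, -l3;
       0, 0, 0, 1, -l4;
       0, 0, 0, 0, 1] : Matrix (Fin 5) (Fin 5) K) id := by
    intro i j hij
    fin_cases i <;> fin_cases j <;> (try exact absurd hij (by decide)) <;>
      simp [Matrix.vecHead, Matrix.vecTail]
  have hdetb : IsUnit (!![-(1-l3*u3)*(1-l4*u4)*(u1-e*u2), -u2*(1-l3*u3)*(1-l4*u4), -u3*(1-l4*u4), -u4, 1;
       0, u1, 0, 0, -e;
       0, 0, 1, 0, -l3;
       0, 0, 0, 1, -l4;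
       0, 0, 0, 0, 1] : Matrix (Fin 5) (Fin 5) K).det := by
    rw [Matrix.det_of_upperTriangular hbtri, Fin.prod_univ_five]
    simp [Matrix.vecHead, Matrix.vecTail]
    refine ⟨⟨⟨fun h => hD3 ?_, hD4⟩, hU⟩, hu1⟩
    linear_combination -h
  have hbinv : (!![-(1-l3*u3)*(1-l4*u4)*(u1-e*u2), -u2*(1-l3*u3)*(1-l4*u4), -u3*(1-l4*u4), -u4, 1;
       0, u1, 0, 0, -e;
       0, 0, 1, 0, -l3;
       0, 0, 0, 1, -l4;
       0, 0, 0, 0, 1] : Matrix (Fin 5) (Fin 5) K)⁻¹ ∈ upperB K 5 := by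
    haveI := Matrix.invertibleOfIsUnitDet _ hdetb
    exact ⟨Matrix.isUnit_nonsing_inv_iff.mpr ((Matrix.isUnit_iff_isUnit_det _).mpr hdetb),
      fun i j h => Matrix.blockTriangular_inv_of_blockTriangular hbtri h⟩
  have hb2mem : (!![u1, u2, u3, u4, 1;
       0, u1-e*u2, -e*u3, -e*u4, -e;
       0, 0, 1-l3*u3, -l3*u4, -l3;
       0, 0, 0, 1-l4*u4, -l4;
       0, 0, 0, 0, 1] : Matrix (Fin 5) (Fin 5) K) ∈ upperB K 5 := by
    refine mem_upperB_of _ ?_ ?_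
    · intro i j hij
      fin_cases i <;> fin_cases j <;> (try exact absurd hij (by decide)) <;>
        simp [Matrix.vecHead, Matrix.vecTail]
    · rw [Fin.prod_univ_five]
      simp [Matrix.vecHead, Matrix.vecTail]
      exact ⟨⟨⟨hu1, hU⟩, hD3⟩, hD4⟩
  refine ⟨_, hbinv, _, hb2mem, ?_⟩
  rw [Matrix.mul_assoc, ← key, ← Matrix.mul_assoc, Matrix.nonsing_inv_mul _ hdetb, Matrix.one_mul]

lemma subset_zClosure {n : ℕ} (S : Set (Matrix (Fin n) (Fin n) K)) : S ⊆ zClosure S :=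
  fun m hm f hf => hf m hm

def evalPolyMat (t : K) (G : Matrix (Fin 5) (Fin 5) (Polynomial K)) :
    Matrix (Fin 5) (Fin 5) K :=
  Matrix.of fun i j => (G i j).eval t

lemma zClosure_curve (S : Set (Matrix (Fin 5) (Fin 5) K))
    (G : Matrix (Fin 5) (Fin 5) (Polynomial K)) (T : Set K) (hT : T.Infinite)
    (h : ∀ t ∈ T, evalPolyMat t G ∈ zClosure S) (t0 : K) :
    evalPolyMat t0 G ∈ zClosure S := by
  intro f hf
  have hcomp : ∀ t : K,
      Polynomial.eval t (MvPolynomial.eval₂ Polynomial.C (fun p => G p.1 p.2) f)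
        = evalMat (evalPolyMat t G) f := by
    intro t
    have h1 := MvPolynomial.eval₂_comp_left (Polynomial.evalRingHom t) Polynomial.C
      (fun p : Fin 5 × Fin 5 => G p.1 p.2) f
    have h2 : (Polynomial.evalRingHom t).comp Polynomial.C = RingHom.id K := by
      ext a; simp
    rw [h2] at h1
    show (Polynomial.evalRingHom t) (MvPolynomial.eval₂ Polynomial.C (fun p => G p.1 p.2) f) = _
    rw [h1, MvPolynomial.eval₂_id]
    rfl
  have hq : MvPolynomial.eval₂ Polynomial.C (fun p : Fin 5 × Fin 5 => G p.1 p.2) f = 0 := by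
    apply Polynomial.eq_zero_of_infinite_isRoot
    apply hT.mono
    intro t ht
    simp only [Set.mem_setOf_eq, Polynomial.IsRoot, hcomp]
    exact h t ht f hf
  rw [← hcomp t0, hq, Polynomial.eval_zero]

lemma evalPolyMat_mk5 (t : K) (p1 p2 p3 p4 p5 p6 p7 p8 p9 p10 : Polynomial K) :
    evalPolyMat t (mk5 p1 p2 p3 p4 p5 p6 p7 p8 p9 p10) =
      mk5 (p1.eval t) (p2.eval t) (p3.eval t) (p4.eval t) (p5.eval t)
        (p6.eval t) (p7.eval t) (p8.eval t) (p9.eval t) (p10.eval t) := by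
  ext i j
  fin_cases i <;> fin_cases j <;> simp [evalPolyMat, mk5, Matrix.vecHead, Matrix.vecTail]

lemma poly_ne (a b c : K) :
    (Polynomial.C c - (Polynomial.X + Polynomial.C a) * (Polynomial.X + Polynomial.C b)) ≠ 0 := by
  intro h
  have h2 : (Polynomial.X + Polynomial.C a) * (Polynomial.X + Polynomial.C b)
      = Polynomial.C c := by linear_combination -h
  have h3 := congrArg Polynomial.natDegree h2
  rw [Polynomial.natDegree_mul (Polynomial.X_add_C_ne_zero a) (Polynomial.X_add_C_ne_zero b),
    Polynomial.natDegree_X_add_C, Polynomial.natDegree_X_add_C, Polynomial.natDegree_C] at h3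
  omega

lemma case1 (e l3 l4 u1 u2 u3 u4 : K) (hu1 : u1 ≠ 0) :
    mk5 e (l3*u1) (l3*u2) (l4*u1) (l4*u2) (l4*u3) u1 u2 u3 u4 ∈
      zClosure (bruhatCell (K := K) (Equiv.swap (0 : Fin 5) 4)) := by
  classical
  set Xp := (Polynomial.X : Polynomial K) with hXp
  set G : Matrix (Fin 5) (Fin 5) (Polynomial K) :=
    mk5 (Xp + Polynomial.C e) ((Xp + Polynomial.C l3) * Polynomial.C u1)
      ((Xp + Polynomial.C l3) * (Xp + Polynomial.C u2))
      ((Xp + Polynomial.C l4) * Polynomial.C u1)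
      ((Xp + Polynomial.C l4) * (Xp + Polynomial.C u2))
      ((Xp + Polynomial.C l4) * (Xp + Polynomial.C u3))
      (Polynomial.C u1) (Xp + Polynomial.C u2) (Xp + Polynomial.C u3)
      (Xp + Polynomial.C u4) with hG
  have hGt : ∀ t : K, evalPolyMat t G =
      mk5 (t+e) ((t+l3)*u1) ((t+l3)*(t+u2)) ((t+l4)*u1) ((t+l4)*(t+u2)) ((t+l4)*(t+u3))
        u1 (t+u2) (t+u3) (t+u4) := by
    intro t
    rw [hG, evalPolyMat_mk5]
    simp [hXp]
  set P : Polynomial K :=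
    (Polynomial.C u1 - (Xp + Polynomial.C e) * (Xp + Polynomial.C u2)) *
    ((Polynomial.C 1 - (Xp + Polynomial.C l3) * (Xp + Polynomial.C u3)) *
     (Polynomial.C 1 - (Xp + Polynomial.C l4) * (Xp + Polynomial.C u4))) with hP
  have hPne : P ≠ 0 := by
    rw [hP]
    exact mul_ne_zero (poly_ne _ _ _) (mul_ne_zero (poly_ne _ _ _) (poly_ne _ _ _))
  set T := {t : K | Polynomial.eval t P ≠ 0} with hT
  have hTinf : T.Infinite := by
    have : T = {t : K | P.IsRoot t}ᶜ := by
      ext t; simp [hT, Polynomial.IsRoot]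
    rw [this]
    exact (Polynomial.finite_setOf_isRoot hPne).infinite_compl
  have hmem : ∀ t ∈ T, evalPolyMat t G ∈
      zClosure (bruhatCell (K := K) (Equiv.swap (0 : Fin 5) 4)) := by
    intro t ht
    have ht' : (u1 - (t+e)*(t+u2)) ≠ 0 ∧ (1 - (t+l3)*(t+u3)) ≠ 0 ∧ (1 - (t+l4)*(t+u4)) ≠ 0 := by
      have := ht
      simp only [hT, Set.mem_setOf_eq, hP, Polynomial.eval_mul, Polynomial.eval_sub,
        Polynomial.eval_add, Polynomial.eval_one, Polynomial.eval_C, Polynomial.eval_X,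
        hXp, mul_ne_zero_iff] at this
      exact ⟨this.1, by simpa using this.2.1, by simpa using this.2.2⟩
    rw [hGt t]
    exact subset_zClosure _
      (genMem (t+e) (t+l3) (t+l4) u1 (t+u2) (t+u3) (t+u4) hu1 ht'.1 ht'.2.1 ht'.2.2)
  have h0 := zClosure_curve _ G T hTinf hmem 0
  rw [hGt 0] at h0
  simpa using h0

lemma case_u1ne (a21 a31 a32 a41 a42 a43 a51 a52 a53 a54 : K) (h51 : a51 ≠ 0)
    (e2 : a41*a52 - a42*a51 = 0) (e4 : a31*a52 - a32*a51 = 0) (e5 : a41*a53 - a43*a51 = 0) :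
    mk5 a21 a31 a32 a41 a42 a43 a51 a52 a53 a54 ∈
      zClosure (bruhatCell (K := K) (Equiv.swap (0 : Fin 5) 4)) := by
  have h := case1 a21 (a31/a51) (a41/a51) a51 a52 a53 a54 h51
  have e31 : a31/a51*a51 = a31 := by field_simp
  have e32 : a31/a51*a52 = a32 := by field_simp; linear_combination e4
  have e41 : a41/a51*a51 = a41 := by field_simp
  have e42 : a41/a51*a52 = a42 := by field_simp; linear_combination e2
  have e43 : a41/a51*a53 = a43 := by field_simp; linear_combination e5
  rwa [e31, e32, e41, e42, e43] at h

lemma zClosure_curve0 (p1 p2 p3 p4 p5 p6 p7 p8 p9 p10 : Polynomial K)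
    (h : ∀ t : K, t ≠ 0 → mk5 (p1.eval t) (p2.eval t) (p3.eval t) (p4.eval t) (p5.eval t)
      (p6.eval t) (p7.eval t) (p8.eval t) (p9.eval t) (p10.eval t) ∈
        zClosure (bruhatCell (K := K) (Equiv.swap (0 : Fin 5) 4))) :
    mk5 (p1.eval 0) (p2.eval 0) (p3.eval 0) (p4.eval 0) (p5.eval 0)
      (p6.eval 0) (p7.eval 0) (p8.eval 0) (p9.eval 0) (p10.eval 0) ∈
        zClosure (bruhatCell (K := K) (Equiv.swap (0 : Fin 5) 4)) := by
  have hT : ({t : K | t ≠ 0}).Infinite := by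
    have h0 : {t : K | t ≠ 0} = ({0} : Set K)ᶜ := by ext t; simp
    rw [h0]
    exact (Set.finite_singleton (0 : K)).infinite_compl
  have hc := zClosure_curve _ (mk5 p1 p2 p3 p4 p5 p6 p7 p8 p9 p10) _ hT
    (fun t ht => by rw [evalPolyMat_mk5]; exact h t ht) 0
  rwa [evalPolyMat_mk5] at hc

lemma caseAll (a21 a31 a32 a41 a42 a43 a51 a52 a53 a54 : K)
    (e1 : a31*a42 - a32*a41 = 0) (e2 : a41*a52 - a42*a51 = 0) (e3 : a42*a53 - a43*a52 = 0)
    (e4 : a31*a52 - a32*a51 = 0) (e5 : a41*a53 - a43*a51 = 0) :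
    mk5 a21 a31 a32 a41 a42 a43 a51 a52 a53 a54 ∈
      zClosure (bruhatCell (K := K) (Equiv.swap (0 : Fin 5) 4)) := by
  classical
  by_cases h51 : a51 = 0
  case neg => exact case_u1ne _ _ _ _ _ _ _ _ _ _ h51 e2 e4 e5
  subst h51
  by_cases h41 : a41 = 0
  case neg =>
    have h52 : a52 = 0 :=
      (mul_eq_zero.mp (show a41 * a52 = 0 by linear_combination e2)).resolve_left h41
    have h53 : a53 = 0 :=
      (mul_eq_zero.mp (show a41 * a53 = 0 by linear_combination e5)).resolve_left h41
    subst h52; subst h53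
    have hc := zClosure_curve0 (Polynomial.C a21) (Polynomial.C a31) (Polynomial.C a32)
      (Polynomial.C a41) (Polynomial.C a42) (Polynomial.C a43) Polynomial.X
      (Polynomial.C (a42/a41) * Polynomial.X) (Polynomial.C (a43/a41) * Polynomial.X)
      (Polynomial.C a54) ?_
    · simpa using hc
    · intro t ht
      simp only [Polynomial.eval_C, Polynomial.eval_X, Polynomial.eval_mul]
      refine case_u1ne _ _ _ _ _ _ _ _ _ _ ht ?_ ?_ ?_
      · field_simp; ring
      · field_simp; linear_combination t * e1
      · field_simp; ring
  subst h41
  by_cases h31 : a31 = 0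
  case neg =>
    have h42 : a42 = 0 :=
      (mul_eq_zero.mp (show a31 * a42 = 0 by linear_combination e1)).resolve_left h31
    have h52 : a52 = 0 :=
      (mul_eq_zero.mp (show a31 * a52 = 0 by linear_combination e4)).resolve_left h31
    subst h42; subst h52
    by_cases h53 : a53 = 0
    case neg =>
      have hc := zClosure_curve0 (Polynomial.C a21) (Polynomial.C a31) (Polynomial.C a32)
        (Polynomial.C (a43/a53) * Polynomial.X)
        (Polynomial.C (a43/a53) * Polynomial.C (a32/a31) * Polynomial.X)
        (Polynomial.C a43) Polynomial.X (Polynomial.C (a32/a31) * Polynomial.X)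
        (Polynomial.C a53) (Polynomial.C a54) ?_
      · simpa using hc
      · intro t ht
        simp only [Polynomial.eval_C, Polynomial.eval_X, Polynomial.eval_mul]
        refine case_u1ne _ _ _ _ _ _ _ _ _ _ ht ?_ ?_ ?_
        · field_simp; ring
        · field_simp; ring
        · field_simp; ring
    subst h53
    have hc := zClosure_curve0 (Polynomial.C a21) (Polynomial.C a31) (Polynomial.C a32)
      (Polynomial.C a43 * Polynomial.X)
      (Polynomial.C (a43*a32/a31) * Polynomial.X)
      (Polynomial.C a43) (Polynomial.X^2) (Polynomial.C (a32/a31) * Polynomial.X^2)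
      Polynomial.X (Polynomial.C a54) ?_
    · simpa using hc
    · intro t ht
      simp only [Polynomial.eval_C, Polynomial.eval_X, Polynomial.eval_mul, Polynomial.eval_pow]
      refine case_u1ne _ _ _ _ _ _ _ _ _ _ (pow_ne_zero 2 ht) ?_ ?_ ?_
      · field_simp; ring
      · field_simp; ring
      · ring
  subst h31
  by_cases h52 : a52 = 0
  case neg =>
    have hc := zClosure_curve0 (Polynomial.C a21) (Polynomial.C (a32/a52) * Polynomial.X)
      (Polynomial.C a32) (Polynomial.C (a42/a52) * Polynomial.X) (Polynomial.C a42)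
      (Polynomial.C a43) Polynomial.X (Polynomial.C a52) (Polynomial.C a53)
      (Polynomial.C a54) ?_
    · simpa using hc
    · intro t ht
      simp only [Polynomial.eval_C, Polynomial.eval_X, Polynomial.eval_mul]
      refine case_u1ne _ _ _ _ _ _ _ _ _ _ ht ?_ ?_ ?_
      · field_simp; ring
      · field_simp; ring
      · field_simp; linear_combination t * e3
  subst h52
  by_cases h42 : a42 = 0
  case neg =>
    have h53 : a53 = 0 :=
      (mul_eq_zero.mp (show a42 * a53 = 0 by linear_combination e3)).resolve_left h42
    subst h53
    have hc := zClosure_curve0 (Polynomial.C a21) (Polynomial.C a32 * Polynomial.X)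
      (Polynomial.C a32) (Polynomial.C a42 * Polynomial.X) (Polynomial.C a42)
      (Polynomial.C a43) (Polynomial.X^2) Polynomial.X (Polynomial.C (a43/a42) * Polynomial.X)
      (Polynomial.C a54) ?_
    · simpa using hc
    · intro t ht
      simp only [Polynomial.eval_C, Polynomial.eval_X, Polynomial.eval_mul, Polynomial.eval_pow]
      refine case_u1ne _ _ _ _ _ _ _ _ _ _ (pow_ne_zero 2 ht) ?_ ?_ ?_
      · ring_nf
      · ring_nf
      · field_simp; ring
  subst h42
  by_cases h53 : a53 = 0
  case neg =>
    have hc := zClosure_curve0 (Polynomial.C a21) (Polynomial.C a32 * Polynomial.X)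
      (Polynomial.C a32) (Polynomial.C (a43/a53) * Polynomial.X^2)
      (Polynomial.C (a43/a53) * Polynomial.X)
      (Polynomial.C a43) (Polynomial.X^2) Polynomial.X (Polynomial.C a53)
      (Polynomial.C a54) ?_
    · simpa using hc
    · intro t ht
      simp only [Polynomial.eval_C, Polynomial.eval_X, Polynomial.eval_mul, Polynomial.eval_pow]
      refine case_u1ne _ _ _ _ _ _ _ _ _ _ (pow_ne_zero 2 ht) ?_ ?_ ?_
      · field_simp; ring
      · ring_nf
      · field_simp; try ring
  subst h53
  have hc := zClosure_curve0 (Polynomial.C a21) (Polynomial.C a32 * Polynomial.X)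
    (Polynomial.C a32) (Polynomial.C a43 * Polynomial.X^2) (Polynomial.C a43 * Polynomial.X)
    (Polynomial.C a43) (Polynomial.X^3) (Polynomial.X^2) Polynomial.X
    (Polynomial.C a54) ?_
  · simpa using hc
  · intro t ht
    simp only [Polynomial.eval_C, Polynomial.eval_X, Polynomial.eval_mul, Polynomial.eval_pow]
    refine case_u1ne _ _ _ _ _ _ _ _ _ _ (pow_ne_zero 3 ht) ?_ ?_ ?_
    · ring_nf
    · ring_nf
    · ring_nf

lemma minors_cell (s : Matrix (Fin 5) (Fin 5) K)
    (hs : s ∈ bruhatCell (K := K) (Equiv.swap (0 : Fin 5) 4)) :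
    s 3 1 * s 2 0 - s 3 0 * s 2 1 = 0 ∧
    s 4 1 * s 3 0 - s 4 0 * s 3 1 = 0 ∧
    s 4 2 * s 3 1 - s 4 1 * s 3 2 = 0 ∧
    s 4 1 * s 2 0 - s 4 0 * s 2 1 = 0 ∧
    s 4 2 * s 3 0 - s 4 0 * s 3 2 = 0 := by
  obtain ⟨b1, hb1, b2, hb2, rfl⟩ := hs
  have p10 : b1 1 0 = 0 := hb1.2 1 0 (by decide)
  have p20 : b1 2 0 = 0 := hb1.2 2 0 (by decide)
  have p21 : b1 2 1 = 0 := hb1.2 2 1 (by decide)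
  have p30 : b1 3 0 = 0 := hb1.2 3 0 (by decide)
  have p31 : b1 3 1 = 0 := hb1.2 3 1 (by decide)
  have p32 : b1 3 2 = 0 := hb1.2 3 2 (by decide)
  have p40 : b1 4 0 = 0 := hb1.2 4 0 (by decide)
  have p41 : b1 4 1 = 0 := hb1.2 4 1 (by decide)
  have p42 : b1 4 2 = 0 := hb1.2 4 2 (by decide)
  have p43 : b1 4 3 = 0 := hb1.2 4 3 (by decide)
  have q10 : b2 1 0 = 0 := hb2.2 1 0 (by decide)
  have q20 : b2 2 0 = 0 := hb2.2 2 0 (by decide)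
  have q21 : b2 2 1 = 0 := hb2.2 2 1 (by decide)
  have q30 : b2 3 0 = 0 := hb2.2 3 0 (by decide)
  have q31 : b2 3 1 = 0 := hb2.2 3 1 (by decide)
  have q32 : b2 3 2 = 0 := hb2.2 3 2 (by decide)
  have q40 : b2 4 0 = 0 := hb2.2 4 0 (by decide)
  have q41 : b2 4 1 = 0 := hb2.2 4 1 (by decide)
  have q42 : b2 4 2 = 0 := hb2.2 4 2 (by decide)
  have q43 : b2 4 3 = 0 := hb2.2 4 3 (by decide)
  refine ⟨?_, ?_, ?_, ?_, ?_⟩ <;>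
    · simp only [Matrix.mul_apply, Fin.sum_univ_five, permMat5]
      simp [Matrix.vecHead, Matrix.vecTail, p10, p20, p21, p30, p31, p32, p40, p41, p42, p43,
        q10, q20, q21, q30, q31, q32, q40, q41, q42, q43]
      ring

lemma eval_smul_hom {σ : Type} [Fintype σ] (φ : MvPolynomial σ K) (n : ℕ)
    (h : φ.IsHomogeneous n) (t : K) (x : σ → K) :
    MvPolynomial.eval (fun i => t * x i) φ = t ^ n * MvPolynomial.eval x φ := by
  rw [MvPolynomial.eval_eq', MvPolynomial.eval_eq', Finset.mul_sum]
  apply Finset.sum_congr rfl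
  intro d hd
  have hdd : d.degree = n := by
    by_contra hne
    exact MvPolynomial.mem_support_iff.mp hd (h.coeff_eq_zero hne)
  have hsum : ∑ i, d i = n := by
    rw [← hdd, Finsupp.degree]
    exact (Finset.sum_subset (Finset.subset_univ _)
      (fun i _ hi => Finsupp.notMem_support_iff.mp hi)).symm
  calc MvPolynomial.coeff d φ * ∏ i, (t * x i) ^ d i
      = MvPolynomial.coeff d φ * ((∏ i, t ^ d i) * ∏ i, x i ^ d i) := by
        rw [← Finset.prod_mul_distrib]
        simp [mul_pow]
    _ = t ^ n * (MvPolynomial.coeff d φ * ∏ i, x i ^ d i) := by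
        rw [Finset.prod_pow_eq_pow_sum, hsum]
        ring

noncomputable def minorPoly (p q r s : Fin 5 × Fin 5) : MvPolynomial (Fin 5 × Fin 5) K :=
  MvPolynomial.X p * MvPolynomial.X q - MvPolynomial.X r * MvPolynomial.X s

lemma minorPoly_hom (p q r s : Fin 5 × Fin 5) :
    (minorPoly (K := K) p q r s).IsHomogeneous 2 := by
  have h1 : (MvPolynomial.X p * MvPolynomial.X q : MvPolynomial (Fin 5 × Fin 5) K).IsHomogeneous 2 :=
    (MvPolynomial.isHomogeneous_X K p).mul (MvPolynomial.isHomogeneous_X K q)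
  have h2 : (MvPolynomial.X r * MvPolynomial.X s : MvPolynomial (Fin 5 × Fin 5) K).IsHomogeneous 2 :=
    (MvPolynomial.isHomogeneous_X K r).mul (MvPolynomial.isHomogeneous_X K s)
  exact h1.sub h2

lemma evalMat_minorPoly (m : Matrix (Fin 5) (Fin 5) K) (p q r s : Fin 5 × Fin 5) :
    evalMat m (minorPoly p q r s) = m p.1 p.2 * m q.1 q.2 - m r.1 r.2 * m s.1 s.2 := by
  simp [evalMat, minorPoly]

lemma minorPoly_ne (p q r s : Fin 5 × Fin 5) (hrp : r ≠ p) (hrq : r ≠ q) :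
    minorPoly (K := K) p q r s ≠ 0 := by
  intro h
  have h0 := congrArg (MvPolynomial.eval
    (fun pr : Fin 5 × Fin 5 => if pr = p ∨ pr = q then (1 : K) else 0)) h
  simp [minorPoly, hrp, hrq] at h0

lemma hc_minor (p q r s : Fin 5 × Fin 5) (e : ℕ) :
    MvPolynomial.homogeneousComponent e (minorPoly (K := K) p q r s) =
      if e = 2 then minorPoly (K := K) p q r s else 0 :=
  MvPolynomial.homogeneousComponent_of_mem
    ((MvPolynomial.mem_homogeneousSubmodule _ _).mpr (minorPoly_hom p q r s))

lemma tangent_minor {x : Matrix (Fin 5) (Fin 5) K}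
    (hmain : ∀ f : MvPolynomial (Fin 5 × Fin 5) K,
      (∀ s ∈ schubertAffine (K := K) (Equiv.swap (0 : Fin 5) 4), evalMat s f = 0) →
      ∀ d : ℕ, (∀ e < d, MvPolynomial.homogeneousComponent e f = 0) →
        MvPolynomial.homogeneousComponent d f ≠ 0 →
        evalMat x (MvPolynomial.homogeneousComponent d f) = 0)
    (p q r s : Fin 5 × Fin 5) (hrp : r ≠ p) (hrq : r ≠ q)
    (hp : p.1 ≠ p.2) (hq : q.1 ≠ q.2) (hr : r.1 ≠ r.2) (hs : s.1 ≠ s.2)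
    (hcell : ∀ m ∈ bruhatCell (K := K) (Equiv.swap (0 : Fin 5) 4),
      m p.1 p.2 * m q.1 q.2 - m r.1 r.2 * m s.1 s.2 = 0) :
    x p.1 p.2 * x q.1 q.2 - x r.1 r.2 * x s.1 s.2 = 0 := by
  have hvan : ∀ m ∈ schubertAffine (K := K) (Equiv.swap (0 : Fin 5) 4),
      evalMat m (minorPoly p q r s) = 0 := by
    rintro m ⟨hml, hmc⟩
    have h1 := hmc (minorPoly p q r s)
      (fun m' hm' => by rw [evalMat_minorPoly]; exact hcell m' hm')
    rw [evalMat_minorPoly] at h1 ⊢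
    rwa [Matrix.add_apply, Matrix.add_apply, Matrix.add_apply, Matrix.add_apply,
      Matrix.one_apply_ne hp, Matrix.one_apply_ne hq, Matrix.one_apply_ne hr,
      Matrix.one_apply_ne hs, zero_add, zero_add, zero_add, zero_add] at h1
  have h2 := hmain _ hvan 2
    (fun e he => by rw [hc_minor]; simp [Nat.ne_of_lt he])
    (by rw [hc_minor, if_pos rfl]; exact minorPoly_ne p q r s hrp hrq)
  rwa [hc_minor, if_pos rfl, evalMat_minorPoly] at h2

lemma rhs_tangent {x : Matrix (Fin 5) (Fin 5) K} (hlow : x ∈ lowerNil K 5)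
    (h1 : x 3 1 * x 2 0 - x 3 0 * x 2 1 = 0)
    (h2 : x 4 1 * x 3 0 - x 4 0 * x 3 1 = 0)
    (h3 : x 4 2 * x 3 1 - x 4 1 * x 3 2 = 0)
    (h4 : x 4 1 * x 2 0 - x 4 0 * x 2 1 = 0)
    (h5 : x 4 2 * x 3 0 - x 4 0 * x 3 2 = 0)
    (f : MvPolynomial (Fin 5 × Fin 5) K)
    (hf : ∀ s ∈ schubertAffine (K := K) (Equiv.swap (0 : Fin 5) 4), evalMat s f = 0)
    (d : ℕ) (hne : MvPolynomial.homogeneousComponent d f ≠ 0) :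
    evalMat x (MvPolynomial.homogeneousComponent d f) = 0 := by
  classical
  have hd : d ≤ f.totalDegree := by
    by_contra hgt
    exact hne (MvPolynomial.homogeneousComponent_eq_zero d f (by omega))
  have hscale : ∀ t : K,
      MvPolynomial.eval (fun pr : Fin 5 × Fin 5 => t * x pr.1 pr.2) f = 0 := by
    intro t
    have hmem : (Matrix.of fun i j => t * x i j) ∈
        schubertAffine (K := K) (Equiv.swap (0 : Fin 5) 4) := by
      refine ⟨fun i j hij => by simp [Matrix.of_apply, hlow i j hij], ?_⟩
      have z00 : x 0 0 = 0 := hlow 0 0 (by decide)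
      have z01 : x 0 1 = 0 := hlow 0 1 (by decide)
      have z02 : x 0 2 = 0 := hlow 0 2 (by decide)
      have z03 : x 0 3 = 0 := hlow 0 3 (by decide)
      have z04 : x 0 4 = 0 := hlow 0 4 (by decide)
      have z11 : x 1 1 = 0 := hlow 1 1 (by decide)
      have z12 : x 1 2 = 0 := hlow 1 2 (by decide)
      have z13 : x 1 3 = 0 := hlow 1 3 (by decide)
      have z14 : x 1 4 = 0 := hlow 1 4 (by decide)
      have z22 : x 2 2 = 0 := hlow 2 2 (by decide)
      have z23 : x 2 3 = 0 := hlow 2 3 (by decide)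
      have z24 : x 2 4 = 0 := hlow 2 4 (by decide)
      have z33 : x 3 3 = 0 := hlow 3 3 (by decide)
      have z34 : x 3 4 = 0 := hlow 3 4 (by decide)
      have z44 : x 4 4 = 0 := hlow 4 4 (by decide)
      have hmk : (1 : Matrix (Fin 5) (Fin 5) K) + (Matrix.of fun i j => t * x i j) =
          mk5 (t*x 1 0) (t*x 2 0) (t*x 2 1) (t*x 3 0) (t*x 3 1) (t*x 3 2)
            (t*x 4 0) (t*x 4 1) (t*x 4 2) (t*x 4 3) := by
        ext i j
        fin_cases i <;> fin_cases j <;>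
          simp [mk5, Matrix.one_apply, Matrix.vecHead, Matrix.vecTail,
            z00, z01, z02, z03, z04, z11, z12, z13, z14, z22, z23, z24, z33, z34, z44]
      rw [hmk]
      exact caseAll _ _ _ _ _ _ _ _ _ _
        (by linear_combination (t*t) * h1) (by linear_combination (t*t) * h2)
        (by linear_combination (t*t) * h3) (by linear_combination (t*t) * h4)
        (by linear_combination (t*t) * h5)
    have := hf _ hmem
    simpa [evalMat, Matrix.of_apply] using this
  set N := f.totalDegree with hN
  set a : ℕ → K := fun e => evalMat x (MvPolynomial.homogeneousComponent e f) with ha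
  have hsum : ∀ t : K, ∑ e ∈ Finset.range (N+1), a e * t ^ e = 0 := by
    intro t
    have hexp : MvPolynomial.eval (fun pr : Fin 5 × Fin 5 => t * x pr.1 pr.2) f
        = ∑ e ∈ Finset.range (N+1), a e * t ^ e := by
      conv_lhs => rw [← MvPolynomial.sum_homogeneousComponent f]
      rw [map_sum]
      refine Finset.sum_congr rfl fun e _ => ?_
      rw [eval_smul_hom _ e (MvPolynomial.homogeneousComponent_isHomogeneous e f) t
        (fun pr : Fin 5 × Fin 5 => x pr.1 pr.2)]
      rw [ha]
      simp [evalMat]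
      ring
    rw [← hexp]
    exact hscale t
  set q : Polynomial K := ∑ e ∈ Finset.range (N+1), Polynomial.C (a e) * Polynomial.X ^ e
    with hqdef
  have hq0 : q = 0 := by
    apply Polynomial.eq_zero_of_infinite_isRoot
    have huniv : {t : K | q.IsRoot t} = Set.univ := by
      ext t
      simp only [Set.mem_setOf_eq, Set.mem_univ, iff_true, Polynomial.IsRoot, hqdef,
        Polynomial.eval_finset_sum, Polynomial.eval_mul, Polynomial.eval_C,
        Polynomial.eval_pow, Polynomial.eval_X]
      exact hsum t
    rw [huniv]
    exact Set.infinite_univ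
  have hcoeff : q.coeff d = a d := by
    rw [hqdef, Polynomial.finset_sum_coeff]
    simp only [Polynomial.coeff_C_mul, Polynomial.coeff_X_pow]
    rw [Finset.sum_congr rfl (fun e _ => by rw [mul_ite, mul_one, mul_zero])]
    rw [Finset.sum_ite_eq (Finset.range (N+1)) d a]
    exact if_pos (Finset.mem_range.mpr (by omega))
  have : a d = 0 := by rw [← hcoeff, hq0]; simp
  exact this

end Scratch

/-- For `n = 5` and `w = (15)`, the tangent cone `C_w` is cut out in `n₋` by the
five equations `x₄₂x₃₁ − x₄₁x₃₂ = 0`, `x₅₂x₄₁ − x₅₁x₄₂ = 0`, `x₅₃x₄₂ − x₅₂x₄₃ = 0`,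
`x₅₂x₃₁ − x₅₁x₃₂ = 0`, `x₅₃x₄₁ − x₅₁x₄₃ = 0` (indices here are 0-based). -/
theorem tangentCone_A4_swap15 {K : Type} [Field K] [IsAlgClosed K] [CharZero K] :
    tangentCone (K := K) (Equiv.swap (0 : Fin 5) 4) =
      {x ∈ lowerNil K 5 |
        x 3 1 * x 2 0 - x 3 0 * x 2 1 = 0 ∧
        x 4 1 * x 3 0 - x 4 0 * x 3 1 = 0 ∧
        x 4 2 * x 3 1 - x 4 1 * x 3 2 = 0 ∧
        x 4 1 * x 2 0 - x 4 0 * x 2 1 = 0 ∧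
        x 4 2 * x 3 0 - x 4 0 * x 3 2 = 0} := by
  ext x
  constructor
  · rintro ⟨hlow, hmain⟩
    refine ⟨hlow, ?_, ?_, ?_, ?_, ?_⟩
    · exact tangent_minor hmain (3,1) (2,0) (3,0) (2,1) (by decide) (by decide)
        (by decide) (by decide) (by decide) (by decide)
        (fun m hm => (minors_cell m hm).1)
    · exact tangent_minor hmain (4,1) (3,0) (4,0) (3,1) (by decide) (by decide)
        (by decide) (by decide) (by decide) (by decide)
        (fun m hm => (minors_cell m hm).2.1)
    · exact tangent_minor hmain (4,2) (3,1) (4,1) (3,2) (by decide) (by decide)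
        (by decide) (by decide) (by decide) (by decide)
        (fun m hm => (minors_cell m hm).2.2.1)
    · exact tangent_minor hmain (4,1) (2,0) (4,0) (2,1) (by decide) (by decide)
        (by decide) (by decide) (by decide) (by decide)
        (fun m hm => (minors_cell m hm).2.2.2.1)
    · exact tangent_minor hmain (4,2) (3,0) (4,0) (3,2) (by decide) (by decide)
        (by decide) (by decide) (by decide) (by decide)
        (fun m hm => (minors_cell m hm).2.2.2.2)
  · rintro ⟨hlow, h1, h2, h3, h4, h5⟩
    exact ⟨hlow, fun f hf d _ hne => rhs_tangent hlow h1 h2 h3 h4 h5 f hf d hne⟩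
end

section
/- Let n = 5 and let w = (14)(25) be the permutation of S_5 exchanging 1 with 4 and 2 with 5. Then the tangent cone C_w of the Schubert variety of w at the origin equals {x ∈ n_- : x_{51} = 0 and x_{54} x_{41} + x_{53} x_{31} + x_{52} x_{21} = 0}. -/
open Matrix MvPolynomial

/-! ### Auxiliary material -/

set_option linter.unreachableTactic false
set_option linter.unusedTactic false
set_option linter.unusedSectionVars false

abbrev w5 : Equiv.Perm (Fin 5) := Equiv.swap (0 : Fin 5) 3 * Equiv.swap (1 : Fin 5) 4

/-- The basic determinantal expression (the "lowest-degree-one-removed" part of the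
4×4 minor of `1+s` on rows 1..4, columns 0..3). -/
def Dex {R : Type*} [CommRing R] (s : Matrix (Fin 5) (Fin 5) R) : R :=
  s 4 1 * s 1 0 + s 4 2 * (s 2 0 - s 2 1 * s 1 0)
    + s 4 3 * (s 3 0 - s 3 1 * s 1 0 - s 3 2 * (s 2 0 - s 2 1 * s 1 0))

def Pex {R : Type*} [CommRing R] (s : Matrix (Fin 5) (Fin 5) R) : R :=
  (s 4 3 * s 3 2 - s 4 2) * s 2 0 - s 4 3 * s 3 0

def cex {R : Type*} [CommRing R] (s : Matrix (Fin 5) (Fin 5) R) : R :=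
  s 3 0 - s 3 1 * s 1 0 - s 3 2 * (s 2 0 - s 2 1 * s 1 0)

section Cell

variable {K : Type} [Field K]

lemma hW : permMat K w5 = !![0,0,0,1,0; 0,0,0,0,1; 0,0,1,0,0; 1,0,0,0,0; 0,1,0,0,0] := by
  have hv : ∀ j : Fin 5, w5 j = ![3,4,2,0,1] j := by decide
  ext i j
  fin_cases i <;> fin_cases j <;>
    simp (config := {decide := true}) [permMat, hv, Matrix.vecHead, Matrix.vecTail]

lemma hWWt : (permMat K w5) * (permMat K w5)ᵀ = 1 ∧ (permMat K w5)ᵀ * (permMat K w5) = 1 := by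
  rw [hW]
  constructor <;> · ext i j; fin_cases i <;> fin_cases j <;>
    simp [Matrix.mul_apply, Fin.sum_univ_five, Matrix.vecHead, Matrix.vecTail, Matrix.one_apply]

set_option maxHeartbeats 2000000 in
/-- The explicit witness that a suitably generic `1+s` lies in the Bruhat cell of `w5`. -/
lemma cell_mem (s : Matrix (Fin 5) (Fin 5) K)
    (hlow : ∀ i j : Fin 5, i ≤ j → s i j = 0) (h40 : s 4 0 = 0) (hD : Dex s = 0)
    (hA1 : s 3 0 ≠ 0) (hA2 : s 4 1 ≠ 0) (hA3 : Pex s ≠ 0) (hA4 : cex s ≠ 0) :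
    (1 + s) ∈ bruhatCell (K := K) w5 := by
  have h00 := hlow 0 0 (by decide); have h01 := hlow 0 1 (by decide)
  have h02 := hlow 0 2 (by decide); have h03 := hlow 0 3 (by decide)
  have h04 := hlow 0 4 (by decide); have h11 := hlow 1 1 (by decide)
  have h12 := hlow 1 2 (by decide); have h13 := hlow 1 3 (by decide)
  have h14 := hlow 1 4 (by decide); have h22 := hlow 2 2 (by decide)
  have h23 := hlow 2 3 (by decide); have h24 := hlow 2 4 (by decide)
  have h33 := hlow 3 3 (by decide); have h34 := hlow 3 4 (by decide)
  have h44 := hlow 4 4 (by decide)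
  set u : Matrix (Fin 5) (Fin 5) K :=
    !![cex s, s 3 1 - s 3 2 * s 2 1, s 3 2, -1, 0;
       0, Pex s, s 1 0 * (s 4 2 - s 4 3 * s 3 2), s 1 0 * s 4 3, -(s 1 0);
       0, 0, s 3 0 * s 4 1, -(s 2 0 * s 4 1), s 2 0 * s 3 1 - s 2 1 * s 3 0;
       0, 0, 0, 1, 0;
       0, 0, 0, 0, 1] with hu_def
  set b2 : Matrix (Fin 5) (Fin 5) K :=
    !![s 3 0, s 3 1, s 3 2, 1, 0;
       0, s 4 1, s 4 2, s 4 3, 1;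
       0, 0, s 3 0 * s 4 1 - s 2 0 * s 4 1 * s 3 2 + (s 2 0 * s 3 1 - s 2 1 * s 3 0) * s 4 2,
         -(s 2 0 * s 4 1) + (s 2 0 * s 3 1 - s 2 1 * s 3 0) * s 4 3,
         s 2 0 * s 3 1 - s 2 1 * s 3 0;
       0, 0, 0, -1, 0;
       0, 0, 0, 0, -(s 1 0)] with hb2_def
  have hD' : s 4 1 * s 1 0 + s 4 2 * (s 2 0 - s 2 1 * s 1 0)
      + s 4 3 * (s 3 0 - s 3 1 * s 1 0 - s 3 2 * (s 2 0 - s 2 1 * s 1 0)) = 0 := hD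
  have key : u * (1 + s) = (permMat K w5) * b2 := by
    rw [hW]
    ext i j
    fin_cases i <;> fin_cases j <;>
      simp [hu_def, hb2_def, Matrix.mul_apply, Fin.sum_univ_five, Matrix.add_apply,
        Matrix.one_apply, Matrix.vecHead, Matrix.vecTail, Pex, cex,
        h00, h01, h02, h03, h04, h11, h12, h13, h14, h22, h23, h24, h33, h34, h44, h40] <;>
      first
        | ring1
        | (linear_combination hD')
        | (linear_combination -hD')
        | (linear_combination (s 1 0) * hD')
        | (linear_combination (-(s 1 0)) * hD')
  -- triangularity of u
  have hutri : u.BlockTriangular id := by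
    intro i j hij
    fin_cases i <;> fin_cases j <;>
      first
        | exact absurd hij (by decide)
        | simp [hu_def, Matrix.vecHead, Matrix.vecTail]
  have hdetu : u.det = cex s * (Pex s * (s 3 0 * s 4 1 * 1)) := by
    rw [Matrix.det_of_upperTriangular hutri]
    simp [hu_def, Fin.prod_univ_five, Matrix.vecHead, Matrix.vecTail]
    ring
  have hdetu_ne : IsUnit u.det := by
    rw [hdetu]
    exact isUnit_iff_ne_zero.2 (by
      exact mul_ne_zero hA4 (mul_ne_zero hA3 (by
        rw [mul_one]; exact mul_ne_zero hA1 hA2)))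
  have huunit : IsUnit u := (Matrix.isUnit_iff_isUnit_det u).2 hdetu_ne
  have huinv_unit : IsUnit u⁻¹ :=
    ⟨⟨u⁻¹, u, Matrix.nonsing_inv_mul u hdetu_ne, Matrix.mul_nonsing_inv u hdetu_ne⟩, rfl⟩
  have huinv_tri : ∀ i j : Fin 5, j < i → u⁻¹ i j = 0 := by
    haveI := u.invertibleOfIsUnitDet hdetu_ne
    exact fun i j hij => Matrix.blockTriangular_inv_of_blockTriangular hutri hij
  -- L = 1 + s facts
  have hLtri : (1 + s).BlockTriangular OrderDual.toDual := by
    intro i j hij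
    have hij' : i < j := hij
    have : i ≠ j := ne_of_lt hij'
    simp [Matrix.add_apply, Matrix.one_apply_ne this, hlow i j (le_of_lt hij')]
  have hdetL : (1 + s).det = 1 := by
    rw [Matrix.det_of_lowerTriangular _ hLtri]
    apply Finset.prod_eq_one
    intro i _
    simp [Matrix.add_apply, Matrix.one_apply_eq, hlow i i (le_refl i)]
  have hLunit : IsUnit (1 + s) :=
    (Matrix.isUnit_iff_isUnit_det _).2 (by rw [hdetL]; exact isUnit_one)
  have hWt_unit : IsUnit (permMat K w5)ᵀ :=
    ⟨⟨(permMat K w5)ᵀ, permMat K w5, hWWt.2, hWWt.1⟩, rfl⟩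
  have hb2_eq : b2 = (permMat K w5)ᵀ * (u * (1 + s)) := by
    rw [key, ← Matrix.mul_assoc, hWWt.2, Matrix.one_mul]
  have hb2_unit : IsUnit b2 := by
    rw [hb2_eq]
    exact hWt_unit.mul (huunit.mul hLunit)
  have hb2_tri : ∀ i j : Fin 5, j < i → b2 i j = 0 := by
    intro i j hij
    fin_cases i <;> fin_cases j <;>
      first
        | exact absurd hij (by decide)
        | simp [hb2_def, Matrix.vecHead, Matrix.vecTail]
  refine ⟨u⁻¹, ⟨huinv_unit, huinv_tri⟩, b2, ⟨hb2_unit, hb2_tri⟩, ?_⟩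
  calc 1 + s = (u⁻¹ * u) * (1 + s) := by
        rw [Matrix.nonsing_inv_mul u hdetu_ne, Matrix.one_mul]
    _ = u⁻¹ * (u * (1 + s)) := by rw [Matrix.mul_assoc]
    _ = u⁻¹ * (permMat K w5 * b2) := by rw [key]
    _ = u⁻¹ * permMat K w5 * b2 := by rw [Matrix.mul_assoc]

/-- Entry `(4,0)` vanishes on the cell. -/
lemma cell40 : ∀ m ∈ bruhatCell (K := K) w5, m 4 0 = 0 := by
  rintro m ⟨b1, ⟨_, hb1t⟩, b2, ⟨_, hb2t⟩, rfl⟩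
  have e10 := hb1t 4 0 (by decide); have e11 := hb1t 4 1 (by decide)
  have e12 := hb1t 4 2 (by decide); have e13 := hb1t 4 3 (by decide)
  have e20 := hb2t 1 0 (by decide); have e21 := hb2t 2 0 (by decide)
  have e22 := hb2t 3 0 (by decide); have e23 := hb2t 4 0 (by decide)
  rw [hW]
  simp [Matrix.mul_apply, Fin.sum_univ_five, Matrix.vecHead, Matrix.vecTail,
    e10, e11, e12, e13, e20, e21, e22, e23]

/-- The variable matrix for the 4×4 minor on rows 1..4 and columns 0..3. -/
noncomputable def minorMat (K : Type) [Field K] :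
    Matrix (Fin 4) (Fin 4) (MvPolynomial (Fin 5 × Fin 5) K) :=
  Matrix.of fun i j => X (![1,2,3,4] i, ![0,1,2,3] j)

/-- The corresponding minor polynomial. -/
noncomputable def dmin (K : Type) [Field K] : MvPolynomial (Fin 5 × Fin 5) K :=
  (minorMat K).det

lemma evalMat_dmin (m : Matrix (Fin 5) (Fin 5) K) :
    evalMat m (dmin K) =
      (Matrix.of fun (i j : Fin 4) => m (![1,2,3,4] i) (![0,1,2,3] j)).det := by
  show (MvPolynomial.eval (fun p : Fin 5 × Fin 5 => m p.1 p.2)) ((minorMat K).det) = _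
  rw [RingHom.map_det]
  congr 1
  ext i j
  simp [minorMat]

/-- The minor polynomial vanishes on the cell. -/
lemma cell_dmin : ∀ m ∈ bruhatCell (K := K) w5, evalMat m (dmin K) = 0 := by
  rintro m ⟨b1, ⟨_, hb1t⟩, b2, ⟨_, hb2t⟩, rfl⟩
  rw [evalMat_dmin]
  have hsucc : ∀ k : Fin 4, (![1,2,3,4] k : Fin 5) = k.succ := by decide
  have hassoc : b1 * permMat K w5 * b2 = b1 * (permMat K w5 * b2) := Matrix.mul_assoc _ _ _
  have hsub : (Matrix.of fun (i j : Fin 4) =>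
        (b1 * permMat K w5 * b2) (![1,2,3,4] i) (![0,1,2,3] j)) =
      (Matrix.of fun (i k : Fin 4) => b1 (![1,2,3,4] i) (![1,2,3,4] k)) *
      (Matrix.of fun (k j : Fin 4) =>
        (permMat K w5 * b2) (![1,2,3,4] k) (![0,1,2,3] j)) := by
    ext i j
    rw [Matrix.of_apply, hassoc, Matrix.mul_apply, Matrix.mul_apply, Fin.sum_univ_succ]
    have h0 : b1 i.succ 0 = 0 := hb1t _ 0 (Fin.succ_pos i)
    simp [hsucc, h0]
  rw [hsub, Matrix.det_mul]
  have hC : (Matrix.of fun (k j : Fin 4) =>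
      (permMat K w5 * b2) (![1,2,3,4] k) (![0,1,2,3] j)).det = 0 := by
    apply Matrix.det_eq_zero_of_row_eq_zero 0
    intro j
    rw [Matrix.of_apply]
    have : (![1,2,3,4] (0 : Fin 4) : Fin 5) = 1 := by decide
    rw [this, hW]
    have hb24 : b2 4 (![0,1,2,3] j) = 0 := hb2t 4 _ (by fin_cases j <;> decide)
    simp [Matrix.mul_apply, Fin.sum_univ_five, Matrix.vecHead, Matrix.vecTail, hb24]
  rw [hC, mul_zero]

/-- On strictly lower triangular `s`, the minor evaluates to `-s 4 0 + Dex s`. -/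
lemma dmin_eval_lower (s : Matrix (Fin 5) (Fin 5) K)
    (hlow : ∀ i j : Fin 5, i ≤ j → s i j = 0) :
    evalMat (1 + s) (dmin K) = -(s 4 0) + Dex s := by
  rw [evalMat_dmin]
  have hM : (Matrix.of fun (i j : Fin 4) => (1 + s) (![1,2,3,4] i) (![0,1,2,3] j)) =
      !![s 1 0, 1, 0, 0; s 2 0, s 2 1, 1, 0; s 3 0, s 3 1, s 3 2, 1;
         s 4 0, s 4 1, s 4 2, s 4 3] := by
    ext i j
    fin_cases i <;> fin_cases j <;>
      simp [Matrix.add_apply, Matrix.one_apply, Matrix.vecHead, Matrix.vecTail,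
        hlow 1 1 (by decide), hlow 1 2 (by decide), hlow 1 3 (by decide),
        hlow 2 2 (by decide), hlow 2 3 (by decide), hlow 3 3 (by decide)]
  rw [hM]
  have hsa : (Fin.succAbove (1 : Fin 4) (2 : Fin 3)) = 3 := by decide
  simp [Matrix.det_succ_row_zero, Fin.sum_univ_succ, Matrix.vecHead, Matrix.vecTail,
    Matrix.det_fin_three, Dex, hsa]
  ring

end Cell

section Helpers

variable {K : Type} [Field K] {σ : Type*} [Fintype σ]

lemma eval_aeval_poly (g : σ → Polynomial K) (f : MvPolynomial σ K) (r : K) :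
    Polynomial.eval r (MvPolynomial.aeval g f) =
      MvPolynomial.eval (fun i => (g i).eval r) f := by
  induction f using MvPolynomial.induction_on with
  | C a => simp
  | add p q hp hq => simp [hp, hq]
  | mul_X p i hp => simp [hp]

lemma homComp_of_isHomogeneous {φ : MvPolynomial σ K} {n m : ℕ}
    (h : φ.IsHomogeneous n) :
    homogeneousComponent m φ = if m = n then φ else 0 := by
  classical
  exact weightedHomogeneousComponent_of_mem h

lemma eval_mul_of_isHomogeneous {φ : MvPolynomial σ K} {n : ℕ}
    (h : φ.IsHomogeneous n) (t : K) (z : σ → K) :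
    MvPolynomial.eval (fun i => t * z i) φ = t ^ n * MvPolynomial.eval z φ := by
  classical
  rw [eval_eq', eval_eq', Finset.mul_sum]
  apply Finset.sum_congr rfl
  intro d hd
  have hdeg : ∑ i : σ, d i = n := by
    have h1 : (Finsupp.weight (1 : σ → ℕ)) d = n := h (mem_support_iff.mp hd)
    rw [Finsupp.weight_apply] at h1
    rw [← h1, Finsupp.sum]
    rw [Finset.sum_subset (Finset.subset_univ d.support)]
    · apply Finset.sum_congr rfl; intro i _; simp
    · intro i _ hi
      simp [Finsupp.notMem_support_iff.mp hi]
  calc coeff d φ * ∏ i : σ, (t * z i) ^ d i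
      = coeff d φ * ((∏ i : σ, t ^ d i) * ∏ i : σ, z i ^ d i) := by
        rw [← Finset.prod_mul_distrib]; simp [mul_pow]
    _ = t ^ n * (coeff d φ * ∏ i : σ, z i ^ d i) := by
        rw [Finset.prod_pow_eq_pow_sum]
        rw [hdeg]; ring

end Helpers

section Curves

variable {K : Type} [Field K] [CharZero K]

/-- If a polynomial vanishes at the matrices of a polynomial curve on an infinite set
of parameters, it vanishes at every parameter. -/
lemma eval_zero_of_eval_infinite (f : MvPolynomial (Fin 5 × Fin 5) K)
    (N : Matrix (Fin 5) (Fin 5) (Polynomial K)) (S : Set K) (hS : S.Infinite)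
    (h : ∀ r ∈ S, evalMat (Matrix.of fun i j => (N i j).eval r) f = 0) :
    ∀ r : K, evalMat (Matrix.of fun i j => (N i j).eval r) f = 0 := by
  set P : Polynomial K := MvPolynomial.aeval (fun p : Fin 5 × Fin 5 => N p.1 p.2) f with hP_def
  have hP : ∀ r : K, P.eval r = evalMat (Matrix.of fun i j => (N i j).eval r) f := by
    intro r
    rw [hP_def, eval_aeval_poly]
    rfl
  have hP0 : P = 0 := by
    apply Polynomial.eq_zero_of_infinite_isRoot
    apply hS.mono
    intro r hr
    show P.eval r = 0
    rw [hP r]; exact h r hr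
  intro r
  rw [← hP r, hP0, Polynomial.eval_zero]

/-- Curve version of membership in the Zariski closure of the cell. -/
lemma lemA_curve (N : Matrix (Fin 5) (Fin 5) (Polynomial K))
    (hlowN : ∀ i j : Fin 5, i ≤ j → N i j = 0) (h40 : N 4 0 = 0) (hD : Dex N = 0)
    (h1 : N 3 0 ≠ 0) (h2 : N 4 1 ≠ 0) (h3 : Pex N ≠ 0) (h4 : cex N ≠ 0) :
    (1 + Matrix.of fun i j => (N i j).eval 0) ∈ zClosure (bruhatCell (K := K) w5) := by
  intro f hf
  set S : Set K := {r | (N 3 0).eval r ≠ 0 ∧ (N 4 1).eval r ≠ 0 ∧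
      (Pex N).eval r ≠ 0 ∧ (cex N).eval r ≠ 0} with hS_def
  have hSfin : Sᶜ.Finite := by
    have : Sᶜ ⊆ {r | (N 3 0).IsRoot r} ∪ {r | (N 4 1).IsRoot r} ∪
        {r | (Pex N).IsRoot r} ∪ {r | (cex N).IsRoot r} := by
      intro r hr
      simp only [hS_def, Set.mem_compl_iff, Set.mem_setOf_eq, not_and_or, not_not] at hr
      rcases hr with h | h | h | h
      · exact Or.inl (Or.inl (Or.inl h))
      · exact Or.inl (Or.inl (Or.inr h))
      · exact Or.inl (Or.inr h)
      · exact Or.inr h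
    exact Set.Finite.subset (((((Polynomial.finite_setOf_isRoot h1).union
      (Polynomial.finite_setOf_isRoot h2)).union
      (Polynomial.finite_setOf_isRoot h3)).union
      (Polynomial.finite_setOf_isRoot h4))) this
  have hSinf : S.Infinite := by
    have := hSfin.infinite_compl
    rwa [compl_compl] at this
  have hone : ∀ r : K, (Matrix.of fun i j => (((1 : Matrix (Fin 5) (Fin 5) (Polynomial K)) + N) i j).eval r)
      = 1 + Matrix.of fun i j => (N i j).eval r := by
    intro r
    ext i j
    by_cases hij : i = j <;>
      simp [Matrix.add_apply, Matrix.one_apply, hij]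
  have hmem : ∀ r ∈ S, evalMat (Matrix.of fun i j =>
      (((1 : Matrix (Fin 5) (Fin 5) (Polynomial K)) + N) i j).eval r) f = 0 := by
    intro r hr
    rw [hone r]
    obtain ⟨c1, c2, c3, c4⟩ := hr
    apply hf
    apply cell_mem
    · intro i j hij
      simp [hlowN i j hij]
    · simp [h40]
    · show Dex (Matrix.of fun i j => (N i j).eval r) = 0
      have : Dex (Matrix.of fun i j => (N i j).eval r) = (Dex N).eval r := by
        simp [Dex]
      rw [this, hD, Polynomial.eval_zero]
    · exact c1
    · exact c2
    · show Pex (Matrix.of fun i j => (N i j).eval r) ≠ 0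
      have : Pex (Matrix.of fun i j => (N i j).eval r) = (Pex N).eval r := by
        simp [Pex]
      rw [this]; exact c3
    · show cex (Matrix.of fun i j => (N i j).eval r) ≠ 0
      have : cex (Matrix.of fun i j => (N i j).eval r) = (cex N).eval r := by
        simp [cex]
      rw [this]; exact c4
  have := eval_zero_of_eval_infinite f (1 + N) S hSinf hmem 0
  rwa [hone 0] at this

/-- Solvability of the cross-product equation. -/
lemma cross_exists (v w : Fin 3 → K) (hv : ¬(v 0 = 0 ∧ v 1 = 0 ∧ v 2 = 0))
    (horth : v 0 * w 0 + v 1 * w 1 + v 2 * w 2 = 0) :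
    ∃ z : Fin 3 → K, v 1 * z 2 - v 2 * z 1 = w 0 ∧ v 2 * z 0 - v 0 * z 2 = w 1 ∧
      v 0 * z 1 - v 1 * z 0 = w 2 := by
  by_cases h0 : v 0 ≠ 0
  · refine ⟨![0, w 2 / v 0, -(w 1) / v 0], ?_, ?_, ?_⟩ <;>
      (simp [Matrix.vecHead, Matrix.vecTail] <;> field_simp <;>
       first | ring1 | linear_combination horth | linear_combination -horth
             | linear_combination (v 0) * horth | linear_combination (-(v 0)) * horth
             | linear_combination (v 1) * horth | linear_combination (-(v 1)) * horth
             | linear_combination (v 2) * horth | linear_combination (-(v 2)) * horth)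
  by_cases h1 : v 1 ≠ 0
  · refine ⟨![-(w 2) / v 1, 0, w 0 / v 1], ?_, ?_, ?_⟩ <;>
      (simp [Matrix.vecHead, Matrix.vecTail] <;> field_simp <;>
       first | ring1 | linear_combination horth | linear_combination -horth
             | linear_combination (v 0) * horth | linear_combination (-(v 0)) * horth
             | linear_combination (v 1) * horth | linear_combination (-(v 1)) * horth
             | linear_combination (v 2) * horth | linear_combination (-(v 2)) * horth)
  by_cases h2 : v 2 ≠ 0
  · refine ⟨![w 1 / v 2, -(w 0) / v 2, 0], ?_, ?_, ?_⟩ <;>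
      (simp [Matrix.vecHead, Matrix.vecTail] <;> field_simp <;>
       first | ring1 | linear_combination horth | linear_combination -horth
             | linear_combination (v 0) * horth | linear_combination (-(v 0)) * horth
             | linear_combination (v 1) * horth | linear_combination (-(v 1)) * horth
             | linear_combination (v 2) * horth | linear_combination (-(v 2)) * horth)
  push_neg at h0 h1 h2
  exact absurd ⟨h0, h1, h2⟩ hv

/-- A straight-line polynomial: value `q` at `0` and `y` at `1`. -/
noncomputable def lin (q y : K) : Polynomial K :=
  Polynomial.C q + Polynomial.C (y - q) * Polynomial.X

@[simp] lemma lin_eval_zero (q y : K) : (lin q y).eval 0 = q := by simp [lin]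
@[simp] lemma lin_eval_one (q y : K) : (lin q y).eval 1 = y := by simp [lin]

set_option maxHeartbeats 2000000 in
lemma lemA (s : Matrix (Fin 5) (Fin 5) K)
    (hlow : ∀ i j : Fin 5, i ≤ j → s i j = 0) (h40 : s 4 0 = 0) (hD : Dex s = 0) :
    (1 + s) ∈ zClosure (bruhatCell (K := K) w5) := by
  have hD' : s 4 1 * s 1 0 + s 4 2 * (s 2 0 - s 2 1 * s 1 0)
      + s 4 3 * (s 3 0 - s 3 1 * s 1 0 - s 3 2 * (s 2 0 - s 2 1 * s 1 0)) = 0 := hD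
  by_cases hv : s 1 0 = 0 ∧ s 2 0 - s 2 1 * s 1 0 = 0 ∧ cex s = 0
  · -- the linear coordinates all vanish: use the second parametrization
    obtain ⟨hva, hvb, hvc⟩ := hv
    have hvc' : s 3 0 - s 3 1 * s 1 0 - s 3 2 * (s 2 0 - s 2 1 * s 1 0) = 0 := hvc
    set Y0 : Polynomial K := lin (s 4 1) 0 with hY0
    set Y1 : Polynomial K := lin (s 4 2) 1 with hY1
    set Y2 : Polynomial K := lin (s 4 3) 0 with hY2
    set W0 : Polynomial K := lin (s 4 1) 1 with hW0
    set W1 : Polynomial K := lin (s 4 2) 1 with hW1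
    set W2 : Polynomial K := lin (s 4 3) 1 with hW2
    set V0 : Polynomial K := Y1 * W2 - Y2 * W1 with hV0
    set V1 : Polynomial K := Y2 * W0 - Y0 * W2 with hV1
    set V2 : Polynomial K := Y0 * W1 - Y1 * W0 with hV2
    set E0 : Polynomial K := lin (s 2 1) 0 with hE0
    set E1 : Polynomial K := lin (s 3 1) 0 with hE1
    set E2 : Polynomial K := lin (s 3 2) 0 with hE2
    set N : Matrix (Fin 5) (Fin 5) (Polynomial K) :=
      !![0,0,0,0,0;
         V0,0,0,0,0;
         V1 + E0 * V0, E0, 0, 0, 0;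
         V2 + E1 * V0 + E2 * V1, E1, E2, 0, 0;
         0, W0, W1, W2, 0] with hN
    have hres := lemA_curve N
      (by intro i j hij; fin_cases i <;> fin_cases j <;>
            first
              | exact absurd hij (by decide)
              | simp [hN, Matrix.vecHead, Matrix.vecTail])
      (by simp [hN, Matrix.vecHead, Matrix.vecTail])
      (by simp only [Dex, hN]
          simp [Matrix.vecHead, Matrix.vecTail, hV0, hV1, hV2]
          try ring1)
      (by intro hcon
          have := congrArg (Polynomial.eval 1) hcon
          simp [hN, Matrix.vecHead, Matrix.vecTail, hV0, hV1, hV2, hE1, hE2, hY0, hY1, hY2,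
            hW0, hW1, hW2, hE0, lin] at this)
      (by intro hcon
          have := congrArg (Polynomial.eval 1) hcon
          simp [hN, Matrix.vecHead, Matrix.vecTail, hW0, lin] at this)
      (by intro hcon
          have := congrArg (Polynomial.eval 1) hcon
          simp only [Pex, hN] at hcon
          have := congrArg (Polynomial.eval 1) hcon
          simp [Matrix.vecHead, Matrix.vecTail, hV0, hV1, hV2, hE0, hE1, hE2, hY0, hY1, hY2,
            hW0, hW1, hW2, lin] at this
          try norm_num at this)
      (by intro hcon
          simp only [cex, hN] at hcon
          have := congrArg (Polynomial.eval 1) hcon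
          simp [Matrix.vecHead, Matrix.vecTail, hV0, hV1, hV2, hE0, hE1, hE2, hY0, hY1, hY2,
            hW0, hW1, hW2, lin] at this
          try norm_num at this)
    have heq : (Matrix.of fun i j => (N i j).eval 0) = s := by
      ext i j
      fin_cases i <;> fin_cases j <;>
        simp [hN, Matrix.vecHead, Matrix.vecTail, hV0, hV1, hV2, hE0, hE1, hE2, hY0, hY1, hY2,
          hW0, hW1, hW2] <;>
        first
          | rfl
          | (exact (hlow _ _ (by decide)).symm)
          | ring1
          | (exact h40.symm)
          | (linear_combination -hva)
          | (linear_combination -hvb - s 2 1 * hva)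
          | (linear_combination -hvc' - s 3 1 * hva - s 3 2 * hvb)
          | (linear_combination hva)
          | (linear_combination hvb + s 2 1 * hva)
          | (linear_combination hvc' + s 3 1 * hva + s 3 2 * hvb)
    rwa [heq] at hres
  · -- some linear coordinate is nonzero: use the first parametrization
    obtain ⟨z, hz1, hz2, hz3⟩ := cross_exists ![s 1 0, s 2 0 - s 2 1 * s 1 0, cex s]
      ![s 4 1, s 4 2, s 4 3]
      (by simpa [Matrix.vecHead, Matrix.vecTail] using hv)
      (by simp [Matrix.vecHead, Matrix.vecTail, cex]; linear_combination hD')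
    simp only [Matrix.cons_val_zero, Matrix.cons_val_one, Matrix.head_cons,
      Matrix.cons_val_two, Matrix.tail_cons, Matrix.head_fin_const] at hz1 hz2 hz3
    set V0 : Polynomial K := lin (s 1 0) 1 with hV0
    set V1 : Polynomial K := lin (s 2 0 - s 2 1 * s 1 0) 1 with hV1
    set V2 : Polynomial K := lin (cex s) 1 with hV2
    set Z0 : Polynomial K := lin (z 0) 0 with hZ0
    set Z1 : Polynomial K := lin (z 1) 1 with hZ1
    set Z2 : Polynomial K := lin (z 2) 2 with hZ2
    set E0 : Polynomial K := lin (s 2 1) 0 with hE0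
    set E1 : Polynomial K := lin (s 3 1) 0 with hE1
    set E2 : Polynomial K := lin (s 3 2) 0 with hE2
    set N : Matrix (Fin 5) (Fin 5) (Polynomial K) :=
      !![0,0,0,0,0;
         V0,0,0,0,0;
         V1 + E0 * V0, E0, 0, 0, 0;
         V2 + E1 * V0 + E2 * V1, E1, E2, 0, 0;
         0, V1 * Z2 - V2 * Z1, V2 * Z0 - V0 * Z2, V0 * Z1 - V1 * Z0, 0] with hN
    have hres := lemA_curve N
      (by intro i j hij; fin_cases i <;> fin_cases j <;>
            first
              | exact absurd hij (by decide)
              | simp [hN, Matrix.vecHead, Matrix.vecTail])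
      (by simp [hN, Matrix.vecHead, Matrix.vecTail])
      (by simp only [Dex, hN]
          simp [Matrix.vecHead, Matrix.vecTail]
          try ring1)
      (by intro hcon
          have := congrArg (Polynomial.eval 1) hcon
          simp [hN, Matrix.vecHead, Matrix.vecTail, hV0, hV1, hV2, hE1, hE2, hE0, lin] at this)
      (by intro hcon
          have := congrArg (Polynomial.eval 1) hcon
          simp [hN, Matrix.vecHead, Matrix.vecTail, hV0, hV1, hV2, hZ0, hZ1, hZ2, lin] at this
          try norm_num at this)
      (by intro hcon
          simp only [Pex, hN] at hcon
          have := congrArg (Polynomial.eval 1) hcon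
          simp [Matrix.vecHead, Matrix.vecTail, hV0, hV1, hV2, hZ0, hZ1, hZ2, hE0, hE1, hE2,
            lin] at this
          try norm_num at this)
      (by intro hcon
          simp only [cex, hN] at hcon
          have := congrArg (Polynomial.eval 1) hcon
          simp [Matrix.vecHead, Matrix.vecTail, hV0, hV1, hV2, hZ0, hZ1, hZ2, hE0, hE1, hE2,
            lin] at this
          try norm_num at this)
    have hcex : cex s = s 3 0 - s 3 1 * s 1 0 - s 3 2 * (s 2 0 - s 2 1 * s 1 0) := rfl
    have heq : (Matrix.of fun i j => (N i j).eval 0) = s := by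
      ext i j
      fin_cases i <;> fin_cases j <;>
        simp [hN, Matrix.vecHead, Matrix.vecTail, hV0, hV1, hV2, hZ0, hZ1, hZ2,
          hE0, hE1, hE2] <;>
        first
          | rfl
          | (exact (hlow _ _ (by decide)).symm)
          | (exact h40.symm)
          | ring1
          | (linear_combination hcex)
          | (linear_combination hz1)
          | (linear_combination hz2)
          | (linear_combination hz3)
          | (linear_combination -hz1)
          | (linear_combination -hz2)
          | (linear_combination -hz3)
    rwa [heq] at hres

end Curves

section Omega

variable {K : Type} [Field K]

lemma omega40 {s : Matrix (Fin 5) (Fin 5) K} (hs : s ∈ schubertAffine (K := K) w5) :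
    s 4 0 = 0 := by
  obtain ⟨hsl, hsz⟩ := hs
  have h0 : ∀ m ∈ bruhatCell (K := K) w5,
      evalMat m (X (((4:Fin 5)),((0:Fin 5)))) = 0 := by
    intro m hm
    simpa [evalMat] using cell40 m hm
  have := hsz _ h0
  simpa [evalMat, Matrix.add_apply, Matrix.one_apply] using this

lemma omegaD {s : Matrix (Fin 5) (Fin 5) K} (hs : s ∈ schubertAffine (K := K) w5) :
    Dex s = 0 := by
  obtain ⟨hsl, hsz⟩ := hs
  have h1 := hsz _ (cell_dmin (K := K))
  rw [dmin_eval_lower s hsl, omega40 ⟨hsl, hsz⟩] at h1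
  linear_combination h1

noncomputable def q2p (K : Type) [Field K] : MvPolynomial (Fin 5 × Fin 5) K :=
  X (4,3) * X (3,0) + X (4,2) * X (2,0) + X (4,1) * X (1,0)

noncomputable def c3p (K : Type) [Field K] : MvPolynomial (Fin 5 × Fin 5) K :=
  -(X (4,2) * X (2,1) * X (1,0)) - X (4,3) * X (3,1) * X (1,0) - X (4,3) * X (3,2) * X (2,0)

noncomputable def c4p (K : Type) [Field K] : MvPolynomial (Fin 5 × Fin 5) K :=
  X (4,3) * X (3,2) * X (2,1) * X (1,0)

noncomputable def f2p (K : Type) [Field K] : MvPolynomial (Fin 5 × Fin 5) K :=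
  q2p K + c3p K + c4p K

lemma q2p_hom : (q2p K).IsHomogeneous 2 :=
  (((isHomogeneous_X K _).mul (isHomogeneous_X K _)).add
    ((isHomogeneous_X K _).mul (isHomogeneous_X K _))).add
    ((isHomogeneous_X K _).mul (isHomogeneous_X K _))

lemma c3p_hom : (c3p K).IsHomogeneous 3 := by
  have hm : ∀ p q r : Fin 5 × Fin 5,
      ((X p * X q * X r : MvPolynomial (Fin 5 × Fin 5) K)).IsHomogeneous 3 := by
    intro p q r
    exact ((isHomogeneous_X K _).mul (isHomogeneous_X K _)).mul (isHomogeneous_X K _)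
  exact (((hm _ _ _).neg).sub (hm _ _ _)).sub (hm _ _ _)

lemma c4p_hom : (c4p K).IsHomogeneous 4 :=
  (((isHomogeneous_X K _).mul (isHomogeneous_X K _)).mul (isHomogeneous_X K _)).mul
    (isHomogeneous_X K _)

lemma f2p_comp (e : ℕ) : homogeneousComponent e (f2p K) =
    (if e = 2 then q2p K else 0) + (if e = 3 then c3p K else 0) +
    (if e = 4 then c4p K else 0) := by
  rw [f2p, map_add, map_add, homComp_of_isHomogeneous (q2p_hom (K := K)),
    homComp_of_isHomogeneous (c3p_hom (K := K)), homComp_of_isHomogeneous (c4p_hom (K := K))]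

lemma q2p_ne : (q2p K) ≠ 0 := by
  intro h
  have h1 := congrArg (evalMat
    (!![0,0,0,0,0; 0,0,0,0,0; 0,0,0,0,0; 1,0,0,0,0; 0,0,0,1,0] : Matrix (Fin 5) (Fin 5) K)) h
  simp [q2p, evalMat, Matrix.vecHead, Matrix.vecTail] at h1

lemma f2p_vanish : ∀ s ∈ schubertAffine (K := K) w5, evalMat s (f2p K) = 0 := by
  intro s hs
  have hval : evalMat s (f2p K) = Dex s := by
    simp [f2p, q2p, c3p, c4p, evalMat, Dex]
    try ring1
  rw [hval, omegaD hs]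

end Omega

set_option maxHeartbeats 2000000 in
/-- For `n = 5` and `w = (14)(25)`, the tangent cone `C_w` equals
`{x ∈ n₋ : x₅₁ = 0 ∧ x₅₄x₄₁ + x₅₃x₃₁ + x₅₂x₂₁ = 0}` (indices here are 0-based). -/
theorem tangentCone_A4_14_25 {K : Type} [Field K] [IsAlgClosed K] [CharZero K] :
    tangentCone (K := K) (Equiv.swap (0 : Fin 5) 3 * Equiv.swap (1 : Fin 5) 4) =
      {x ∈ lowerNil K 5 |
        x 4 0 = 0 ∧ x 4 3 * x 3 0 + x 4 2 * x 2 0 + x 4 1 * x 1 0 = 0} := by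
  apply Set.eq_of_subset_of_subset
  · rintro x ⟨hxl, hx⟩
    refine ⟨hxl, ?_, ?_⟩
    · -- x 4 0 = 0
      have hvan : ∀ s ∈ schubertAffine (K := K) w5,
          evalMat s (X (((4:Fin 5)),((0:Fin 5)))) = 0 := by
        rintro s ⟨hsl, hsz⟩
        have h40 := omega40 (K := K) ⟨hsl, hsz⟩
        simpa [evalMat] using h40
      have hcomps : ∀ e < 1, homogeneousComponent e
          (X (((4:Fin 5)),((0:Fin 5))) : MvPolynomial (Fin 5 × Fin 5) K) = 0 := by
        intro e he
        have he0 : e = 0 := Nat.lt_one_iff.mp he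
        subst he0
        rw [homogeneousComponent_zero]
        simp
      have hc1 : homogeneousComponent 1
          (X (((4:Fin 5)),((0:Fin 5))) : MvPolynomial (Fin 5 × Fin 5) K)
          = X (((4:Fin 5)),((0:Fin 5))) := by
        rw [homComp_of_isHomogeneous (isHomogeneous_X K _)]
        simp
      have hres := hx _ hvan 1 hcomps (by rw [hc1]; exact X_ne_zero _)
      rw [hc1] at hres
      simpa [evalMat] using hres
    · -- the quadric
      have hcomps : ∀ e < 2, homogeneousComponent e (f2p K) = 0 := by
        intro e he
        rw [f2p_comp]
        interval_cases e <;> simp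
      have hres := hx (f2p K) f2p_vanish 2 hcomps
        (by rw [f2p_comp]; simpa using q2p_ne)
      rw [f2p_comp] at hres
      simp only [if_pos rfl] at hres
      norm_num at hres
      simpa [q2p, evalMat] using hres
  · rintro x ⟨hxl, hx40, hxq⟩
    refine ⟨hxl, ?_⟩
    intro f hf d hcomps hdne
    by_cases hdt : totalDegree f < d
    · exact absurd (homogeneousComponent_eq_zero _ _ hdt) hdne
    push_neg at hdt
    set y : Matrix (Fin 5) (Fin 5) K :=
      !![0,0,0,0,0; 0,0,0,0,0; x 2 1 * x 1 0,0,0,0,0;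
         x 3 1 * x 1 0 + x 3 2 * x 2 0,0,0,0,0; 0,0,0,0,0] with hy
    have hylow : ∀ i j : Fin 5, i ≤ j → y i j = 0 := by
      intro i j hij
      fin_cases i <;> fin_cases j <;>
        first
          | exact absurd hij (by decide)
          | simp [hy, Matrix.vecHead, Matrix.vecTail]
    set st : K → Matrix (Fin 5) (Fin 5) K :=
      fun t => Matrix.of fun i j => t * (x i j + t * y i j) with hst
    have hstΩ : ∀ t : K, st t ∈ schubertAffine (K := K) w5 := by
      intro t
      have hstlow : ∀ i j : Fin 5, i ≤ j → st t i j = 0 := by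
        intro i j hij
        simp [hst, hxl i j hij, hylow i j hij]
      refine ⟨hstlow, ?_⟩
      apply lemA _ hstlow
      · show t * (x 4 0 + t * y 4 0) = 0
        simp [hy, Matrix.vecHead, Matrix.vecTail, hx40]
      · show Dex (st t) = 0
        simp only [Dex, hst, Matrix.of_apply, hy]
        simp [Matrix.vecHead, Matrix.vecTail]
        first
          | ring1
          | linear_combination (t^2) * hxq
          | linear_combination (-(t^2)) * hxq
          | linear_combination (t*t) * hxq
    have hzero : ∀ t : K, evalMat (st t) f = 0 := fun t => hf (st t) (hstΩ t)
    set z : K → (Fin 5 × Fin 5) → K := fun t p => x p.1 p.2 + t * y p.1 p.2 with hz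
    have key1 : ∀ t : K, ∑ e ∈ Finset.range (totalDegree f + 1),
        t^e * MvPolynomial.eval (z t) (homogeneousComponent e f) = 0 := by
      intro t
      have h0 : MvPolynomial.eval (fun p : Fin 5 × Fin 5 => st t p.1 p.2) f = 0 := hzero t
      calc ∑ e ∈ Finset.range (totalDegree f + 1),
            t^e * MvPolynomial.eval (z t) (homogeneousComponent e f)
          = ∑ e ∈ Finset.range (totalDegree f + 1),
            MvPolynomial.eval (fun p : Fin 5 × Fin 5 => st t p.1 p.2)
              (homogeneousComponent e f) := by
            apply Finset.sum_congr rfl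
            intro e _
            rw [show (fun p : Fin 5 × Fin 5 => st t p.1 p.2) = (fun p => t * z t p) from rfl,
               eval_mul_of_isHomogeneous (homogeneousComponent_isHomogeneous e f) t (z t)]
        _ = MvPolynomial.eval (fun p : Fin 5 × Fin 5 => st t p.1 p.2) f := by
            rw [← map_sum, MvPolynomial.sum_homogeneousComponent f]
        _ = 0 := h0
    have key2 : ∀ t : K, ∑ e ∈ Finset.Ico d (totalDegree f + 1),
        t^e * MvPolynomial.eval (z t) (homogeneousComponent e f) = 0 := by
      intro t
      rw [← key1 t]
      apply Finset.sum_subset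
      · intro e he
        simp only [Finset.mem_Ico] at he
        exact Finset.mem_range.mpr he.2
      · intro e he1 he2
        have hed : e < d := by
          simp only [Finset.mem_range] at he1
          simp only [Finset.mem_Ico, not_and, not_lt] at he2
          omega
        rw [hcomps e hed]
        simp
    set Q : Polynomial K := ∑ e ∈ Finset.Ico d (totalDegree f + 1),
      (Polynomial.X)^(e-d) * (MvPolynomial.aeval
        (fun p : Fin 5 × Fin 5 => Polynomial.C (x p.1 p.2) + Polynomial.X * Polynomial.C (y p.1 p.2))
        (homogeneousComponent e f)) with hQ
    have hQeval : ∀ t : K, Q.eval t = ∑ e ∈ Finset.Ico d (totalDegree f + 1),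
        t^(e-d) * MvPolynomial.eval (z t) (homogeneousComponent e f) := by
      intro t
      rw [hQ, Polynomial.eval_finset_sum]
      apply Finset.sum_congr rfl
      intro e _
      rw [Polynomial.eval_mul, Polynomial.eval_pow, Polynomial.eval_X, eval_aeval_poly]
      have harg : (fun p : Fin 5 × Fin 5 =>
          (Polynomial.C (x p.1 p.2) + Polynomial.X * Polynomial.C (y p.1 p.2)).eval t)
          = z t := by
        funext p
        simp [hz]
        try ring1
      rw [harg]
    have hQzero : ∀ t : K, t ≠ 0 → Q.eval t = 0 := by
      intro t ht
      have h1 : t^d * Q.eval t = 0 := by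
        rw [hQeval t, Finset.mul_sum, ← key2 t]
        apply Finset.sum_congr rfl
        intro e he
        simp only [Finset.mem_Ico] at he
        rw [← mul_assoc, ← pow_add]
        congr 2
        omega
      rcases mul_eq_zero.mp h1 with h | h
      · exact absurd h (pow_ne_zero d ht)
      · exact h
    have hQ0 : Q = 0 := by
      apply Polynomial.eq_zero_of_infinite_isRoot
      apply Set.Infinite.mono (s := {t : K | t ≠ 0})
      · exact fun t ht => hQzero t ht
      · have : ({t : K | t ≠ 0}) = ({(0:K)} : Set K)ᶜ := by
          ext t; simp
        rw [this]
        exact (Set.finite_singleton (0:K)).infinite_compl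
    have hv0 : Q.eval 0 = 0 := by rw [hQ0]; simp
    rw [hQeval 0] at hv0
    have hsum : (∑ e ∈ Finset.Ico d (totalDegree f + 1),
        (0:K)^(e-d) * MvPolynomial.eval (z 0) (homogeneousComponent e f))
        = (0:K)^(d-d) * MvPolynomial.eval (z 0) (homogeneousComponent d f) := by
      apply Finset.sum_eq_single d
      · intro e he hne
        simp only [Finset.mem_Ico] at he
        rw [zero_pow (by omega : e - d ≠ 0), zero_mul]
      · intro hd
        exact absurd (Finset.mem_Ico.mpr ⟨le_refl d, by omega⟩) hd
    rw [hsum, Nat.sub_self, pow_zero, one_mul] at hv0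
    have hz0 : z 0 = fun p : Fin 5 × Fin 5 => x p.1 p.2 := by
      funext p
      simp [hz]
    rw [hz0] at hv0
    exact hv0
end

section
/- (Conjecture 2, verified for A_n with n ≤ 4.) For every n ≤ 5 and every permutation w ∈ S_n, the tangent cone of the Schubert variety of w at the origin equals the tangent cone of the Schubert variety of w^{-1} at the origin: C_w = C_{w^{-1}}. -/
open Matrix MvPolynomial

namespace TCaux

open Finset

variable {K : Type} [Field K] {σ : Type*}

variable {K : Type} [Field K] {σ : Type*}

/-- All monomials of `F` have degree at least `m`. -/
def Lo (m : ℕ) (F : MvPolynomial σ K) : Prop :=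
  ∀ μ ∈ F.support, m ≤ μ.degree

lemma degree_add (a b : σ →₀ ℕ) : (a + b).degree = a.degree + b.degree := by
  classical
  simp only [Finsupp.degree_eq_weight_one]
  exact map_add _ a b

lemma lo_mono {m m' : ℕ} (h : m' ≤ m) {F : MvPolynomial σ K} (hF : Lo m F) : Lo m' F :=
  fun μ hμ => le_trans h (hF μ hμ)

lemma lo_zero (m : ℕ) : Lo m (0 : MvPolynomial σ K) := by simp [Lo]

lemma lo_bot (F : MvPolynomial σ K) : Lo 0 F := fun _ _ => Nat.zero_le _

lemma lo_add {m : ℕ} {F G : MvPolynomial σ K} (hF : Lo m F) (hG : Lo m G) : Lo m (F + G) := by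
  classical
  intro μ hμ
  rcases Finset.mem_union.1 (MvPolynomial.support_add hμ) with h | h
  · exact hF μ h
  · exact hG μ h

lemma lo_neg {m : ℕ} {F : MvPolynomial σ K} (hF : Lo m F) : Lo m (-F) := by
  intro μ hμ
  exact hF μ (by simpa [MvPolynomial.support_neg] using hμ)

lemma lo_sub {m : ℕ} {F G : MvPolynomial σ K} (hF : Lo m F) (hG : Lo m G) : Lo m (F - G) := by
  rw [sub_eq_add_neg]; exact lo_add hF (lo_neg hG)

lemma lo_sum {m : ℕ} {ι : Type*} (s : Finset ι) (F : ι → MvPolynomial σ K)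
    (h : ∀ i ∈ s, Lo m (F i)) : Lo m (∑ i ∈ s, F i) := by
  classical
  induction s using Finset.induction_on with
  | empty => simpa using lo_zero m
  | insert a s hx ih =>
      rw [Finset.sum_insert hx]
      exact lo_add (h _ (Finset.mem_insert_self _ _))
        (ih fun i hi => h i (Finset.mem_insert_of_mem hi))

lemma lo_mul {a b : ℕ} {F G : MvPolynomial σ K} (hF : Lo a F) (hG : Lo b G) :
    Lo (a + b) (F * G) := by
  classical
  intro μ hμ
  obtain ⟨u, hu, v, hv, rfl⟩ := Finset.mem_add.1 (MvPolynomial.support_mul F G hμ)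
  rw [degree_add]
  exact add_le_add (hF u hu) (hG v hv)

lemma lo_pow {F : MvPolynomial σ K} (h : Lo 1 F) (e : ℕ) : Lo e (F ^ e) := by
  induction e with
  | zero => exact lo_bot _
  | succ e ih => rw [pow_succ]; exact lo_mul ih h

lemma lo_X (p : σ) : Lo 1 (X p : MvPolynomial σ K) := by
  classical
  intro μ hμ
  rw [MvPolynomial.support_X] at hμ
  rw [Finset.mem_singleton.1 hμ]
  simp [Finsupp.degree_single]

lemma lo_C_mul {m : ℕ} {F : MvPolynomial σ K} (c : K) (hF : Lo m F) : Lo m (C c * F) := by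
  intro μ hμ
  rw [← MvPolynomial.smul_eq_C_mul] at hμ
  exact hF μ (MvPolynomial.support_smul hμ)

lemma lo_monomial {m : ℕ} {μ : σ →₀ ℕ} (c : K) (h : m ≤ μ.degree) :
    Lo m (monomial μ c : MvPolynomial σ K) := by
  classical
  intro ν hν
  have hc : coeff ν (monomial μ c : MvPolynomial σ K) ≠ 0 := MvPolynomial.mem_support_iff.1 hν
  rw [MvPolynomial.coeff_monomial] at hc
  by_cases hμν : μ = ν
  · exact hμν ▸ h
  · simp [hμν] at hc

lemma comp_eq_zero_of_lo {m e : ℕ} {F : MvPolynomial σ K} (h : Lo m F) (he : e < m) :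
    homogeneousComponent e F = 0 :=
  homogeneousComponent_eq_zero' _ _ fun μ hμ => by have := h μ hμ; omega

lemma lo_of_comp {m : ℕ} {F : MvPolynomial σ K}
    (h : ∀ e < m, homogeneousComponent e F = 0) : Lo m F := by
  intro μ hμ
  by_contra hlt
  push_neg at hlt
  have h1 : coeff μ (homogeneousComponent μ.degree F) = coeff μ F := by
    simp [coeff_homogeneousComponent]
  rw [h _ hlt] at h1
  exact MvPolynomial.mem_support_iff.1 hμ (by simpa using h1.symm)

lemma lo_prod_pow (s : Finset σ) (F : σ → MvPolynomial σ K) (μ : σ → ℕ)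
    (hF : ∀ p, Lo 1 (F p)) : Lo (∑ p ∈ s, μ p) (∏ p ∈ s, F p ^ μ p) := by
  classical
  induction s using Finset.induction_on with
  | empty => simpa using lo_bot _
  | insert a s hx ih =>
      rw [Finset.sum_insert hx, Finset.prod_insert hx]
      exact lo_mul (lo_pow (hF _) _) ih

lemma lo_pow_sub {a b : MvPolynomial σ K} (ha : Lo 1 a) (hb : Lo 1 b)
    (hab : Lo 2 (a - b)) (e : ℕ) : Lo (e + 1) (a ^ e - b ^ e) := by
  induction e with
  | zero => simpa using lo_zero 1
  | succ e ih =>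
      have hid : a ^ (e + 1) - b ^ (e + 1) = a ^ e * (a - b) + (a ^ e - b ^ e) * b := by ring
      rw [hid]
      refine lo_add (lo_mono ?_ (lo_mul (lo_pow ha e) hab)) (lo_mono ?_ (lo_mul ih hb)) <;> omega

lemma lo_prod_sub (s : Finset σ) (F G : σ → MvPolynomial σ K) (μ : σ → ℕ)
    (hF : ∀ p, Lo 1 (F p)) (hG : ∀ p, Lo 1 (G p)) (hFG : ∀ p, Lo 2 (F p - G p)) :
    Lo ((∑ p ∈ s, μ p) + 1) ((∏ p ∈ s, F p ^ μ p) - ∏ p ∈ s, G p ^ μ p) := by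
  classical
  induction s using Finset.induction_on with
  | empty => simpa using lo_zero 1
  | @insert a s hx ih =>
      rw [Finset.sum_insert hx, Finset.prod_insert hx, Finset.prod_insert hx]
      have hid : F a ^ μ a * (∏ p ∈ s, F p ^ μ p) - G a ^ μ a * (∏ p ∈ s, G p ^ μ p)
          = (F a ^ μ a - G a ^ μ a) * (∏ p ∈ s, F p ^ μ p)
            + G a ^ μ a * ((∏ p ∈ s, F p ^ μ p) - ∏ p ∈ s, G p ^ μ p) := by ring
      rw [hid]
      refine lo_add (lo_mono ?_ (lo_mul (lo_pow_sub (hF a) (hG a) (hFG a) (μ a))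
        (lo_prod_pow s F μ hF))) (lo_mono ?_ (lo_mul (lo_pow (hG a) (μ a)) ih)) <;> omega

lemma sum_support_eq_degree (μ : σ →₀ ℕ) : ∑ p ∈ μ.support, μ p = μ.degree := rfl

lemma lo_bind₁_monomial {P : σ → MvPolynomial σ K} (hP : ∀ p, Lo 1 (P p))
    (μ : σ →₀ ℕ) (c : K) : Lo μ.degree (bind₁ P (monomial μ c)) := by
  rw [bind₁_monomial]
  exact lo_C_mul c (by simpa [sum_support_eq_degree] using lo_prod_pow μ.support P μ hP)

lemma lo_bind₁ {P : σ → MvPolynomial σ K} (hP : ∀ p, Lo 1 (P p)) {d : ℕ}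
    {f : MvPolynomial σ K} (hf : Lo d f) : Lo d (bind₁ P f) := by
  classical
  conv => rw [f.as_sum]
  rw [map_sum]
  exact lo_sum f.support _ fun μ hμ => lo_mono (hf μ hμ) (lo_bind₁_monomial hP μ _)

lemma prod_neg_X_pow (μ : σ →₀ ℕ) :
    (∏ p ∈ μ.support, (-X p : MvPolynomial σ K) ^ μ p)
      = ((-1 : K) ^ μ.degree) • monomial μ (1 : K) := by
  classical
  have h1 : ∀ p ∈ μ.support, (-X p : MvPolynomial σ K) ^ μ p
      = (-1 : MvPolynomial σ K) ^ μ p * X p ^ μ p := by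
    intro p _; rw [neg_pow]
  rw [Finset.prod_congr rfl h1, Finset.prod_mul_distrib, Finset.prod_pow_eq_pow_sum,
    prod_X_pow_eq_monomial, sum_support_eq_degree, MvPolynomial.smul_eq_C_mul, map_pow, _root_.map_neg, MvPolynomial.C_1]

lemma comp_monomial_self (μ : σ →₀ ℕ) (c : K) :
    homogeneousComponent μ.degree (monomial μ c : MvPolynomial σ K) = monomial μ c := by
  rw [homogeneousComponent_of_mem ((mem_homogeneousSubmodule μ.degree (monomial μ c)).2
    (isHomogeneous_monomial c rfl)), if_pos rfl]

lemma comp_monomial_ne {d : ℕ} (μ : σ →₀ ℕ) (c : K) (h : μ.degree ≠ d) :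
    homogeneousComponent d (monomial μ c : MvPolynomial σ K) = 0 := by
  classical
  refine homogeneousComponent_eq_zero' _ _ fun ν hν => ?_
  have hc : coeff ν (monomial μ c : MvPolynomial σ K) ≠ 0 := MvPolynomial.mem_support_iff.1 hν
  rw [MvPolynomial.coeff_monomial] at hc
  by_cases hμν : μ = ν
  · exact hμν ▸ h
  · simp [hμν] at hc

lemma comp_bind₁ {P : σ → MvPolynomial σ K} (hP1 : ∀ p, Lo 1 (P p))
    (hP2 : ∀ p, Lo 2 (P p + X p)) {d : ℕ} {f : MvPolynomial σ K} (hf : Lo d f) :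
    homogeneousComponent d (bind₁ P f)
      = ((-1 : K) ^ d) • homogeneousComponent d f := by
  classical
  conv_lhs => rw [f.as_sum]
  conv_rhs => rw [f.as_sum]
  rw [map_sum, map_sum, map_sum, Finset.smul_sum]
  refine Finset.sum_congr rfl fun μ hμ => ?_
  have hdμ : d ≤ μ.degree := hf μ hμ
  rcases eq_or_lt_of_le hdμ with heq | hlt
  · -- degree μ = d
    rw [bind₁_monomial]
    have hdiff : Lo (μ.degree + 1)
        ((∏ p ∈ μ.support, P p ^ μ p) - ∏ p ∈ μ.support, (-X p : MvPolynomial σ K) ^ μ p) := by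
      have := lo_prod_sub μ.support P (fun p => -X p) μ hP1 (fun p => lo_neg (lo_X p))
        (fun p => by simpa [sub_neg_eq_add] using hP2 p)
      simpa [sum_support_eq_degree] using this
    have hsplit : (∏ p ∈ μ.support, P p ^ μ p)
        = ((-1 : K) ^ μ.degree) • monomial μ (1 : K)
          + ((∏ p ∈ μ.support, P p ^ μ p) - ∏ p ∈ μ.support, (-X p : MvPolynomial σ K) ^ μ p) := by
      rw [← prod_neg_X_pow]; ring
    rw [hsplit, mul_add, map_add]
    have hz : homogeneousComponent d
        (C (coeff μ f) * ((∏ p ∈ μ.support, P p ^ μ p)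
          - ∏ p ∈ μ.support, (-X p : MvPolynomial σ K) ^ μ p)) = 0 := by
      refine comp_eq_zero_of_lo (lo_C_mul _ hdiff) ?_
      omega
    rw [hz, add_zero, mul_smul_comm, _root_.map_smul, homogeneousComponent_C_mul, heq,
      comp_monomial_self, comp_monomial_self, MvPolynomial.C_mul_monomial, mul_one]
  · -- d < degree μ
    rw [comp_eq_zero_of_lo (lo_bind₁_monomial hP1 μ _) hlt,
      comp_monomial_ne μ _ (by omega), smul_zero]

/-- scaling of a homogeneous polynomial -/
lemma eval_mul_of_isHomogeneous {k : ℕ} {φ : MvPolynomial σ K} (h : φ.IsHomogeneous k)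
    (c : K) (v : σ → K) : eval (fun i => c * v i) φ = c ^ k * eval v φ := by
  classical
  conv_lhs => rw [φ.as_sum]
  conv_rhs => rw [φ.as_sum]
  rw [map_sum, map_sum, Finset.mul_sum]
  refine Finset.sum_congr rfl fun μ hμ => ?_
  rw [eval_monomial, eval_monomial]
  have hdeg : μ.degree = k := by
    have := h (MvPolynomial.mem_support_iff.1 hμ)
    rwa [Finsupp.degree_eq_weight_one]
  have hp : (μ.prod fun p e => (c * v p) ^ e) = c ^ k * μ.prod fun p e => v p ^ e := by
    rw [Finsupp.prod, Finsupp.prod]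
    have : ∀ p ∈ μ.support, (c * v p) ^ μ p = c ^ μ p * v p ^ μ p := fun p _ => mul_pow _ _ _
    rw [Finset.prod_congr rfl this, Finset.prod_mul_distrib, Finset.prod_pow_eq_pow_sum,
      sum_support_eq_degree, hdeg]
  rw [hp]; ring


variable {n : ℕ}

/-- The generic matrix of variables. -/
noncomputable def Xm (K : Type) [Field K] (n : ℕ) :
    Matrix (Fin n) (Fin n) (MvPolynomial (Fin n × Fin n) K) :=
  Matrix.of fun i j => X (i, j)

lemma evalMap_Xm (m : Matrix (Fin n) (Fin n) K) :
    (eval (fun p => m p.1 p.2) : MvPolynomial (Fin n × Fin n) K →+* K).mapMatrix (Xm K n) = m := by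
  ext i j
  simp [Xm, RingHom.mapMatrix_apply, Matrix.map_apply]

lemma eval_bind₁ {σ : Type*} (v : σ → K) (P : σ → MvPolynomial σ K) (φ : MvPolynomial σ K) :
    eval v (bind₁ P φ) = eval (fun p => eval v (P p)) φ :=
  eval₂Hom_bind₁ _ _ _ _

lemma eval_adjugate_X (m : Matrix (Fin n) (Fin n) K) (p : Fin n × Fin n) :
    eval (fun q => m q.1 q.2) ((Xm K n).adjugate p.1 p.2) = m.adjugate p.1 p.2 := by
  have h := RingHom.map_adjugate
    (eval (fun q => m q.1 q.2) : MvPolynomial (Fin n × Fin n) K →+* K) (Xm K n)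
  rw [evalMap_Xm] at h
  calc eval (fun q => m q.1 q.2) ((Xm K n).adjugate p.1 p.2)
      = ((eval (fun q => m q.1 q.2) :
          MvPolynomial (Fin n × Fin n) K →+* K).mapMatrix ((Xm K n).adjugate)) p.1 p.2 := rfl
    _ = m.adjugate p.1 p.2 := by rw [h]

/- lowerNil facts -/

lemma lowerNil_mul {s t : Matrix (Fin n) (Fin n) K} (hs : s ∈ lowerNil K n)
    (ht : t ∈ lowerNil K n) : s * t ∈ lowerNil K n := by
  intro i j hij
  rw [Matrix.mul_apply]
  apply Finset.sum_eq_zero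
  intro l _
  by_cases hl : i ≤ l
  · rw [hs i l hl, zero_mul]
  · push_neg at hl
    rw [ht l j (le_of_lt (lt_of_lt_of_le hl hij)), mul_zero]

lemma lowerNil_neg {s : Matrix (Fin n) (Fin n) K} (hs : s ∈ lowerNil K n) :
    (-s) ∈ lowerNil K n := by
  intro i j hij
  rw [Matrix.neg_apply, hs i j hij, neg_zero]

lemma lowerNil_pow {s : Matrix (Fin n) (Fin n) K} (hs : s ∈ lowerNil K n) (k : ℕ) :
    s ^ (k + 1) ∈ lowerNil K n := by
  induction k with
  | zero => simpa [pow_one] using hs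
  | succ k ih => rw [pow_succ]; exact lowerNil_mul ih hs

lemma lowerNil_pow_entry {s : Matrix (Fin n) (Fin n) K} (hs : s ∈ lowerNil K n) (k : ℕ) :
    ∀ i j : Fin n, (i : ℕ) < (j : ℕ) + k → (s ^ k) i j = 0 := by
  induction k with
  | zero =>
      intro i j hij
      have hne : i ≠ j := by
        intro he; subst he; omega
      rw [pow_zero]
      exact Matrix.one_apply_ne hne
  | succ k ih =>
      intro i j hij
      rw [pow_succ, Matrix.mul_apply]
      apply Finset.sum_eq_zero
      intro l _
      by_cases hl : l ≤ j
      · rw [hs l j hl, mul_zero]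
      · push_neg at hl
        have : (i : ℕ) < (l : ℕ) + k := by
          have := Fin.lt_def.1 hl
          omega
        rw [ih i l this, zero_mul]

lemma lowerNil_pow_n {s : Matrix (Fin n) (Fin n) K} (hs : s ∈ lowerNil K n) :
    s ^ (n + 1) = 0 := by
  ext i j
  rw [Matrix.zero_apply]
  exact lowerNil_pow_entry hs (n + 1) i j (by have := i.isLt; omega)

/-- The inversion map on strictly lower triangular matrices: `iota s = (1+s)⁻¹ - 1`. -/
noncomputable def iota (s : Matrix (Fin n) (Fin n) K) : Matrix (Fin n) (Fin n) K :=
  ∑ k ∈ Finset.range n, (-s) ^ (k + 1)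

lemma iota_lowerNil {s : Matrix (Fin n) (Fin n) K} (hs : s ∈ lowerNil K n) :
    iota s ∈ lowerNil K n := by
  intro i j hij
  rw [iota, Matrix.sum_apply]
  exact Finset.sum_eq_zero fun k _ => lowerNil_pow (lowerNil_neg hs) k i j hij

lemma one_add_iota_eq (s : Matrix (Fin n) (Fin n) K) :
    1 + iota s = ∑ k ∈ Finset.range (n + 1), (-s) ^ k := by
  rw [Finset.sum_range_succ', pow_zero, iota, add_comm]

lemma neg_pow_succ_zero {s : Matrix (Fin n) (Fin n) K} (hs : s ∈ lowerNil K n) :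
    (-s) ^ (n + 1) = 0 :=
  lowerNil_pow_n (lowerNil_neg hs)

lemma one_add_mul_one_add_iota {s : Matrix (Fin n) (Fin n) K} (hs : s ∈ lowerNil K n) :
    (1 + s) * (1 + iota s) = 1 := by
  have key := mul_geom_sum (-s) (n + 1)
  rw [neg_pow_succ_zero hs, zero_sub] at key
  have h1 : (-s) - 1 = -(1 + s) := by abel
  rw [h1, neg_mul] at key
  have := neg_injective key
  rw [one_add_iota_eq]
  exact this

lemma one_add_iota_mul_one_add {s : Matrix (Fin n) (Fin n) K} (hs : s ∈ lowerNil K n) :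
    (1 + iota s) * (1 + s) = 1 := by
  have key := geom_sum_mul (-s) (n + 1)
  rw [neg_pow_succ_zero hs, zero_sub] at key
  have h1 : (-s) - 1 = -(1 + s) := by abel
  rw [h1, mul_neg] at key
  have := neg_injective key
  rw [one_add_iota_eq]
  exact this

lemma inv_one_add {s : Matrix (Fin n) (Fin n) K} (hs : s ∈ lowerNil K n) :
    (1 + s)⁻¹ = 1 + iota s :=
  Matrix.inv_eq_right_inv (one_add_mul_one_add_iota hs)

lemma det_one_add {s : Matrix (Fin n) (Fin n) K} (hs : s ∈ lowerNil K n) :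
    (1 + s).det = 1 := by
  have ht : (1 + s).BlockTriangular OrderDual.toDual := by
    intro i j hij
    have hij' : i < j := hij
    rw [Matrix.add_apply, Matrix.one_apply_ne (ne_of_lt hij'), hs i j (le_of_lt hij'), add_zero]
  rw [Matrix.det_of_lowerTriangular _ ht]
  refine Finset.prod_eq_one fun i _ => ?_
  rw [Matrix.add_apply, Matrix.one_apply_eq, hs i i le_rfl, add_zero]

lemma adjugate_one_add {s : Matrix (Fin n) (Fin n) K} (hs : s ∈ lowerNil K n) :
    (1 + s).adjugate = 1 + iota s := by
  have h1 : (1 + s) * (1 + s).adjugate = 1 := by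
    rw [Matrix.mul_adjugate, det_one_add hs, one_smul]
  rw [← Matrix.inv_eq_right_inv h1, inv_one_add hs]

/- permMat and upperB facts -/

lemma permMat_mul_permMat_inv (w : Equiv.Perm (Fin n)) :
    permMat K w * permMat K w⁻¹ = 1 := by
  ext i j
  rw [Matrix.mul_apply, Finset.sum_eq_single (w⁻¹ j)]
  · simp [permMat, Matrix.one_apply, eq_comm]
  · intro l _ hl
    have hne : ¬ (w⁻¹ j = l) := fun h => hl h.symm
    simp [permMat, hne]
    intro h; exact absurd h hne
  · intro h
    exact absurd (Finset.mem_univ _) h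

lemma upperB_mul_inv {b : Matrix (Fin n) (Fin n) K} (hb : b ∈ upperB K n) : b * b⁻¹ = 1 :=
  Matrix.mul_nonsing_inv b ((Matrix.isUnit_iff_isUnit_det b).1 hb.1)

lemma upperB_inv_mul {b : Matrix (Fin n) (Fin n) K} (hb : b ∈ upperB K n) : b⁻¹ * b = 1 :=
  Matrix.nonsing_inv_mul b ((Matrix.isUnit_iff_isUnit_det b).1 hb.1)

lemma upperB_inv {b : Matrix (Fin n) (Fin n) K} (hb : b ∈ upperB K n) : b⁻¹ ∈ upperB K n := by
  constructor
  · exact ⟨⟨b⁻¹, b, upperB_inv_mul hb, upperB_mul_inv hb⟩, rfl⟩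
  · intro i j hij
    letI := hb.1.invertible
    have hbt : b.BlockTriangular (id : Fin n → Fin n) := fun i j h => hb.2 i j h
    exact Matrix.blockTriangular_inv_of_blockTriangular hbt hij

lemma bruhat_unit_inv {w : Equiv.Perm (Fin n)} {y : Matrix (Fin n) (Fin n) K}
    (hy : y ∈ bruhatCell w) : IsUnit y ∧ y⁻¹ ∈ bruhatCell w⁻¹ := by
  obtain ⟨b₁, hb₁, b₂, hb₂, rfl⟩ := hy
  set c := b₂⁻¹ * permMat K w⁻¹ * b₁⁻¹ with hc
  have h1 : (b₁ * permMat K w * b₂) * c = 1 := by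
    simp only [hc, mul_assoc]
    rw [← mul_assoc b₂ b₂⁻¹, upperB_mul_inv hb₂, one_mul,
      ← mul_assoc (permMat K w), permMat_mul_permMat_inv, one_mul, upperB_mul_inv hb₁]
  have h2 : c * (b₁ * permMat K w * b₂) = 1 := by
    simp only [hc, mul_assoc]
    rw [← mul_assoc b₁⁻¹ b₁, upperB_inv_mul hb₁, one_mul,
      ← mul_assoc (permMat K w⁻¹), (by simpa using permMat_mul_permMat_inv (K := K) w⁻¹ :
        permMat K w⁻¹ * permMat K w = 1), one_mul, upperB_inv_mul hb₂]
  refine ⟨⟨⟨_, c, h1, h2⟩, rfl⟩, ?_⟩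
  rw [Matrix.inv_eq_right_inv h1]
  exact ⟨b₂⁻¹, upperB_inv hb₂, b₁⁻¹, upperB_inv hb₁, rfl⟩

/- the Zariski closure transfer -/

lemma zClosure_step {w : Equiv.Perm (Fin n)} {s : Matrix (Fin n) (Fin n) K}
    (hs : s ∈ lowerNil K n) (h : (1 + s) ∈ zClosure (bruhatCell w)) :
    (1 + iota s) ∈ zClosure (bruhatCell w⁻¹) := by
  intro f hf
  classical
  set T := f.totalDegree with hT
  set A : Fin n × Fin n → MvPolynomial (Fin n × Fin n) K :=
    fun p => (Xm K n).adjugate p.1 p.2 with hA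
  set h' : MvPolynomial (Fin n × Fin n) K :=
    ∑ e ∈ Finset.range (T + 1), ((Xm K n).det) ^ (T - e) * bind₁ A (homogeneousComponent e f)
    with hh'
  have keyeval : ∀ m : Matrix (Fin n) (Fin n) K, evalMat m h' =
      ∑ e ∈ Finset.range (T + 1), m.det ^ (T - e) *
        eval (fun p => m.adjugate p.1 p.2) (homogeneousComponent e f) := by
    intro m
    show eval (fun p => m p.1 p.2) h' = _
    rw [hh', map_sum]
    refine Finset.sum_congr rfl fun e he => ?_
    rw [_root_.map_mul, map_pow, RingHom.map_det, evalMap_Xm, eval_bind₁]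
    have harg : (fun p : Fin n × Fin n => (eval fun q : Fin n × Fin n => m q.1 q.2) (A p))
        = fun p => m.adjugate p.1 p.2 := funext fun p => by simp only [hA]; exact eval_adjugate_X m p
    rw [harg]
  have hvan : ∀ y ∈ bruhatCell (K := K) w, evalMat y h' = 0 := by
    intro y hy
    obtain ⟨hyu, hyi⟩ := bruhat_unit_inv hy
    have hdet : IsUnit y.det := (Matrix.isUnit_iff_isUnit_det y).1 hyu
    have hadj : y.adjugate = y.det • y⁻¹ := by
      calc y.adjugate = 1 * y.adjugate := (one_mul _).symm
        _ = y⁻¹ * y * y.adjugate := by rw [Matrix.nonsing_inv_mul y hdet]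
        _ = y⁻¹ * (y.det • 1) := by rw [mul_assoc, Matrix.mul_adjugate]
        _ = y.det • y⁻¹ := by rw [Matrix.mul_smul, mul_one]
    rw [keyeval]
    have hterm : ∀ e ∈ Finset.range (T + 1),
        y.det ^ (T - e) * eval (fun p => y.adjugate p.1 p.2) (homogeneousComponent e f)
        = y.det ^ T * eval (fun p => y⁻¹ p.1 p.2) (homogeneousComponent e f) := by
      intro e he
      have hfun : (fun p : Fin n × Fin n => y.adjugate p.1 p.2)
          = fun p => y.det * y⁻¹ p.1 p.2 := by
        funext p
        rw [hadj, Matrix.smul_apply, smul_eq_mul]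
      rw [hfun, eval_mul_of_isHomogeneous (homogeneousComponent_isHomogeneous e f) _ _,
        ← mul_assoc, ← pow_add]
      congr 2
      have : e < T + 1 := Finset.mem_range.1 he
      omega
    rw [Finset.sum_congr rfl hterm, ← Finset.mul_sum, ← map_sum, hT, sum_homogeneousComponent]
    have hz : evalMat y⁻¹ f = 0 := hf _ hyi
    rw [show eval (fun p => y⁻¹ p.1 p.2) f = evalMat y⁻¹ f from rfl, hz, mul_zero]
  have h0 := h h' hvan
  rw [keyeval, det_one_add hs, adjugate_one_add hs] at h0
  simp only [one_pow, one_mul] at h0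
  rw [← map_sum, hT, sum_homogeneousComponent] at h0
  exact h0

lemma schubert_step {w : Equiv.Perm (Fin n)} {s : Matrix (Fin n) (Fin n) K}
    (hs : s ∈ schubertAffine w) : iota s ∈ schubertAffine w⁻¹ :=
  ⟨iota_lowerNil hs.1, zClosure_step hs.1 hs.2⟩

lemma evalMat_smul (m : Matrix (Fin n) (Fin n) K) (c : K) (F : MvPolynomial (Fin n × Fin n) K) :
    evalMat m (c • F) = c * evalMat m F := by
  unfold evalMat
  rw [MvPolynomial.smul_eq_C_mul, _root_.map_mul, eval_C]

lemma mat_lo_mul {a b : ℕ} {M N : Matrix (Fin n) (Fin n) (MvPolynomial (Fin n × Fin n) K)}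
    (hM : ∀ i j, Lo a (M i j)) (hN : ∀ i j, Lo b (N i j)) :
    ∀ i j, Lo (a + b) ((M * N) i j) := by
  intro i j
  rw [Matrix.mul_apply]
  exact lo_sum _ _ fun l _ => lo_mul (hM i l) (hN l j)

lemma mat_lo_pow {M : Matrix (Fin n) (Fin n) (MvPolynomial (Fin n × Fin n) K)}
    (hM : ∀ i j, Lo 1 (M i j)) : ∀ (k : ℕ) (i j : Fin n), Lo k ((M ^ k) i j) := by
  intro k
  induction k with
  | zero => intro i j; exact lo_bot _
  | succ k ih =>
      intro i j
      rw [pow_succ]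
      exact mat_lo_mul ih hM i j

lemma neg_Xm_entry_lo (i j : Fin n) : Lo 1 ((-(Xm K n)) i j) := by
  rw [Matrix.neg_apply]
  exact lo_neg (lo_X (K := K) (i, j))

set_option maxHeartbeats 2000000 in
lemma cone_subset (w : Equiv.Perm (Fin n)) :
    tangentCone (K := K) w ⊆ tangentCone (K := K) w⁻¹ := by
  rcases Nat.eq_zero_or_pos n with hn0 | hpos
  · subst hn0
    have hw : w⁻¹ = w := Equiv.ext fun i => i.elim0
    rw [hw]
  intro x hx
  obtain ⟨hxl, hcone⟩ := hx
  refine ⟨hxl, ?_⟩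
  intro f hf d hlow hne
  classical
  set Pmat : Matrix (Fin n) (Fin n) (MvPolynomial (Fin n × Fin n) K) :=
    ∑ k ∈ Finset.range n, (-(Xm K n)) ^ (k + 1) with hPmat
  set P : Fin n × Fin n → MvPolynomial (Fin n × Fin n) K := fun p => Pmat p.1 p.2 with hP
  have hP1 : ∀ p, Lo 1 (P p) := by
    intro p
    rw [hP, hPmat]
    simp only [Matrix.sum_apply]
    exact lo_sum _ _ fun k _ =>
      lo_mono (by omega) (mat_lo_pow neg_Xm_entry_lo (k + 1) p.1 p.2)
  have hXmp : ∀ p : Fin n × Fin n, Xm K n p.1 p.2 = X p := by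
    intro p; simp [Xm]
  have hP2 : ∀ p, Lo 2 (P p + X p) := by
    intro p
    have h0 : (0 : ℕ) ∈ Finset.range n := Finset.mem_range.2 hpos
    have hsplit : Pmat = (∑ k ∈ Finset.range n \ {0}, (-(Xm K n)) ^ (k + 1))
        + (-(Xm K n)) ^ (0 + 1) := Finset.sum_eq_sum_sdiff_singleton_add h0 _
    have heq : P p + X p = (∑ k ∈ Finset.range n \ {0}, (-(Xm K n)) ^ (k + 1)) p.1 p.2 := by
      rw [hP]
      show Pmat p.1 p.2 + X p = _
      rw [hsplit, Matrix.add_apply, pow_one, Matrix.neg_apply, hXmp p]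
      ring
    rw [heq, Matrix.sum_apply]
    refine lo_sum _ _ fun k hk => ?_
    have hk1 : 1 ≤ k := by
      rcases Finset.mem_sdiff.1 hk with ⟨-, h2⟩
      simp only [Finset.mem_singleton] at h2
      omega
    exact lo_mono (by omega) (mat_lo_pow neg_Xm_entry_lo (k + 1) p.1 p.2)
  have hvan : ∀ s ∈ schubertAffine (K := K) w, evalMat s (bind₁ P f) = 0 := by
    intro s hsw
    have hmap : ((eval (fun p => s p.1 p.2) :
        MvPolynomial (Fin n × Fin n) K →+* K).mapMatrix) Pmat = iota s := by
      rw [hPmat, map_sum, iota]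
      refine Finset.sum_congr rfl fun k _ => ?_
      rw [map_pow, map_neg, evalMap_Xm]
    have heval : evalMat s (bind₁ P f) = evalMat (iota s) f := by
      show eval (fun p => s p.1 p.2) (bind₁ P f) = eval (fun p => (iota s) p.1 p.2) f
      rw [eval_bind₁]
      have harg : (fun p : Fin n × Fin n => eval (fun q : Fin n × Fin n => s q.1 q.2) (P p))
          = fun p => (iota s) p.1 p.2 := by
        funext p
        calc eval (fun q : Fin n × Fin n => s q.1 q.2) (P p)
            = ((eval (fun q : Fin n × Fin n => s q.1 q.2) :
                MvPolynomial (Fin n × Fin n) K →+* K).mapMatrix Pmat) p.1 p.2 := rfl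
          _ = (iota s) p.1 p.2 := by rw [hmap]
      rw [harg]
    rw [heval]
    exact hf _ (schubert_step hsw)
  have hfLo : Lo d f := lo_of_comp hlow
  have hcompg : homogeneousComponent d (bind₁ P f)
      = ((-1 : K) ^ d) • homogeneousComponent d f := comp_bind₁ hP1 hP2 hfLo
  have hc1 : ((-1 : K) ^ d) ≠ 0 := pow_ne_zero _ (neg_ne_zero.2 one_ne_zero)
  have hg := hcone (bind₁ P f) hvan d
    (fun e he => comp_eq_zero_of_lo (lo_bind₁ hP1 hfLo) he)
    (by rw [hcompg]; exact smul_ne_zero hc1 hne)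
  rw [hcompg] at hg
  rw [evalMat_smul] at hg
  rcases mul_eq_zero.1 hg with h | h
  · exact absurd h hc1
  · exact h

end TCaux

/-- Conjecture 2, verified for `Aₙ` with `n ≤ 4`: for every `n ≤ 5` and every
`w ∈ Sₙ`, the tangent cones of the Schubert varieties of `w` and `w⁻¹` at the
origin coincide: `C_w = C_{w⁻¹}`. -/
theorem tangentCone_inv {K : Type} [Field K] [IsAlgClosed K] [CharZero K]
    (n : ℕ) (hn : n ≤ 5) (w : Equiv.Perm (Fin n)) :
    tangentCone (K := K) w = tangentCone (K := K) w⁻¹ := by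
  refine Set.Subset.antisymm (TCaux.cone_subset w) ?_
  have h := TCaux.cone_subset (K := K) w⁻¹
  rwa [inv_inv] at h
end

section
/- For every n, every w ∈ S_n, every invertible upper triangular matrix b ∈ B, and every x in the tangent cone C_w, the strictly lower triangular part of the matrix b x b^{-1} again lies in C_w; that is, each tangent cone C_w is invariant under the coadjoint action of B on n^* ≅ n_-. -/
open Matrix MvPolynomial

namespace SchubertTC

variable {K : Type} [Field K] {σ' : Type*}

/-- all monomials of `p` have degree at least `e`. -/
def MinDeg (p : MvPolynomial σ' K) (e : ℕ) : Prop :=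
  ∀ d : σ' →₀ ℕ, coeff d p ≠ 0 → e ≤ d.degree

lemma minDeg_mono {p : MvPolynomial σ' K} {e e' : ℕ} (h : MinDeg p e) (he : e' ≤ e) :
    MinDeg p e' := fun d hd => le_trans he (h d hd)

lemma minDeg_zero (p : MvPolynomial σ' K) : MinDeg p 0 := fun _ _ => Nat.zero_le _

lemma minDeg_zero' (e : ℕ) : MinDeg (0 : MvPolynomial σ' K) e := by
  intro d hd; simp at hd

lemma minDeg_add {p q : MvPolynomial σ' K} {e : ℕ} (hp : MinDeg p e) (hq : MinDeg q e) :
    MinDeg (p + q) e := by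
  intro d hd
  rw [coeff_add] at hd
  by_cases h1 : coeff d p = 0
  · exact hq d (by intro h2; rw [h1, h2, add_zero] at hd; exact hd rfl)
  · exact hp d h1

lemma minDeg_sum {ι : Type*} {s : Finset ι} {f : ι → MvPolynomial σ' K} {e : ℕ}
    (h : ∀ i ∈ s, MinDeg (f i) e) : MinDeg (∑ i ∈ s, f i) e := by
  classical
  induction s using Finset.induction_on with
  | empty => simpa using minDeg_zero' e
  | insert _ _ hni ih =>
    rw [Finset.sum_insert hni]
    exact minDeg_add (h _ (Finset.mem_insert_self _ _))
      (ih fun i hi => h i (Finset.mem_insert_of_mem hi))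

lemma degree_add' (u v : σ' →₀ ℕ) : (u + v).degree = u.degree + v.degree := by
  simp [Finsupp.degree_eq_weight_one, map_add]

lemma minDeg_mul {p q : MvPolynomial σ' K} {a c : ℕ} (hp : MinDeg p a) (hq : MinDeg q c) :
    MinDeg (p * q) (a + c) := by
  classical
  intro d hd
  rw [coeff_mul] at hd
  obtain ⟨x, hx, hne⟩ := Finset.exists_ne_zero_of_sum_ne_zero hd
  have h1 : coeff x.1 p ≠ 0 := left_ne_zero_of_mul hne
  have h2 : coeff x.2 q ≠ 0 := right_ne_zero_of_mul hne
  have hxd : x.1 + x.2 = d := Finset.HasAntidiagonal.mem_antidiagonal.mp hx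
  calc a + c ≤ x.1.degree + x.2.degree := add_le_add (hp _ h1) (hq _ h2)
    _ = d.degree := by rw [← degree_add', hxd]

lemma minDeg_pow {p : MvPolynomial σ' K} {a : ℕ} (h : MinDeg p a) (k : ℕ) :
    MinDeg (p ^ k) (k * a) := by
  induction k with
  | zero => simpa using minDeg_zero _
  | succ k ih =>
    rw [pow_succ, add_mul, one_mul]
    exact minDeg_mul ih h

lemma minDeg_of_isHomogeneous {p : MvPolynomial σ' K} {e : ℕ} (h : p.IsHomogeneous e) :
    MinDeg p e := by
  intro d hd
  have := h hd
  rw [Finsupp.degree_eq_weight_one]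
  exact this.ge


lemma minDeg_homogeneousComponent_eq_zero {p : MvPolynomial σ' K} {e : ℕ} (h : MinDeg p e)
    {e' : ℕ} (he : e' < e) : homogeneousComponent e' p = 0 := by
  apply MvPolynomial.ext
  intro d
  rw [coeff_homogeneousComponent, coeff_zero]
  split_ifs with hdeg
  · by_contra hc
    have := h d hc
    omega
  · rfl

lemma minDeg_of_components {p : MvPolynomial σ' K} {e : ℕ}
    (h : ∀ e' < e, homogeneousComponent e' p = 0) : MinDeg p e := by
  intro d hd
  by_contra hlt
  push_neg at hlt
  have h0 := h _ hlt
  have := coeff_homogeneousComponent (R := K) d.degree p d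
  rw [h0, coeff_zero, if_pos rfl] at this
  exact hd this.symm

lemma minDeg_of_constantCoeff {p : MvPolynomial σ' K} (h : constantCoeff p = 0) :
    MinDeg p 1 := by
  apply minDeg_of_components
  intro e' he'
  interval_cases e'
  rw [constantCoeff_eq] at h
  rw [homogeneousComponent_zero, h, map_zero]

lemma comp_eq_zero_of_isHomogeneous {p : MvPolynomial σ' K} {e d : ℕ}
    (h : p.IsHomogeneous e) (hne : d ≠ e) : homogeneousComponent d p = 0 := by
  rw [homogeneousComponent_of_mem ((mem_homogeneousSubmodule _ _).mpr h), if_neg hne]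

lemma comp_eq_self_of_isHomogeneous {p : MvPolynomial σ' K} {e : ℕ}
    (h : p.IsHomogeneous e) : homogeneousComponent e p = p := by
  rw [homogeneousComponent_of_mem ((mem_homogeneousSubmodule _ _).mpr h), if_pos rfl]

lemma homogeneousComponent_mul_of_isHomogeneous {p A : MvPolynomial σ' K} {d : ℕ}
    (hA : A.IsHomogeneous d) :
    homogeneousComponent d (p * A) = C (constantCoeff p) * A := by
  have key : p * A = C (constantCoeff p) * A + (p - C (constantCoeff p)) * A := by ring
  rw [key, map_add, homogeneousComponent_C_mul, comp_eq_self_of_isHomogeneous hA,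
    minDeg_homogeneousComponent_eq_zero
      (minDeg_mul (minDeg_of_constantCoeff (by rw [map_sub, constantCoeff_C, sub_self]))
        (minDeg_of_isHomogeneous hA)) (by omega : d < 1 + d), add_zero]

lemma comp_one_mul (p u : MvPolynomial σ' K) :
    homogeneousComponent 1 (p * u) =
      C (constantCoeff u) * homogeneousComponent 1 p
      + C (constantCoeff p) * homogeneousComponent 1 u := by
  have hC : ∀ r : K, homogeneousComponent 1 (C (σ := σ') r) = 0 := fun r =>
    comp_eq_zero_of_isHomogeneous (isHomogeneous_C _ _) one_ne_zero
  have hp' : MinDeg (p - C (constantCoeff p)) 1 :=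
    minDeg_of_constantCoeff (by rw [map_sub, constantCoeff_C, sub_self])
  have hu' : MinDeg (u - C (constantCoeff u)) 1 :=
    minDeg_of_constantCoeff (by rw [map_sub, constantCoeff_C, sub_self])
  have h1 : homogeneousComponent 1
      ((p - C (constantCoeff p)) * (u - C (constantCoeff u))) = 0 :=
    minDeg_homogeneousComponent_eq_zero (minDeg_mul hp' hu') (by omega)
  have key : p * u = C (constantCoeff p * constantCoeff u)
      + (C (constantCoeff u) * (p - C (constantCoeff p))
        + C (constantCoeff p) * (u - C (constantCoeff u)))
      + (p - C (constantCoeff p)) * (u - C (constantCoeff u)) := by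
    rw [C_mul]; ring
  rw [key, map_add, map_add, map_add, h1, hC, homogeneousComponent_C_mul,
    homogeneousComponent_C_mul, map_sub, map_sub, hC, hC]
  ring

lemma eval_aeval' {σ'' : Type*} (x : σ'' → K) (g : σ' → MvPolynomial σ'' K)
    (f : MvPolynomial σ' K) :
    eval x (aeval g f) = eval (fun v => eval x (g v)) f := by
  rw [aeval_def, eval_eval₂]
  have hcomp : (eval x).comp (algebraMap K (MvPolynomial σ'' K)) = RingHom.id K := by
    ext r
    simp [MvPolynomial.algebraMap_eq]
  rw [hcomp, eval₂_id]

lemma eval_smul_of_isHomogeneous {f : MvPolynomial σ' K} {e : ℕ} (hf : f.IsHomogeneous e)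
    (c : K) (pt : σ' → K) :
    eval (fun v => c * pt v) f = c ^ e * eval pt f := by
  conv_lhs => rw [← f.support_sum_monomial_coeff]
  conv_rhs => rw [← f.support_sum_monomial_coeff]
  rw [map_sum, map_sum, Finset.mul_sum]
  apply Finset.sum_congr rfl
  intro m hm
  rw [eval_monomial, eval_monomial]
  have hdeg : ∑ v ∈ m.support, m v = e := by
    simpa [Finsupp.weight_apply, Finsupp.sum, mul_one] using hf (mem_support_iff.mp hm)
  rw [Finsupp.prod, Finsupp.prod]
  simp_rw [mul_pow]
  rw [Finset.prod_mul_distrib, Finset.prod_pow_eq_pow_sum, hdeg]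
  ring


section Subst

variable {φ ψ : σ' → MvPolynomial σ' K}

lemma minDeg_prod_pow (hφ : ∀ v, MinDeg (φ v) 1) (s : Finset σ') (m : σ' → ℕ) :
    MinDeg (∏ v ∈ s, φ v ^ m v) (∑ v ∈ s, m v) := by
  classical
  induction s using Finset.induction_on with
  | empty => simpa using minDeg_zero _
  | insert _ _ hni ih =>
    rw [Finset.prod_insert hni, Finset.sum_insert hni]
    exact minDeg_mul (by simpa using minDeg_pow (hφ _) _) ih

lemma minDeg_pow_sub {v : σ'} (hφ : ∀ v, MinDeg (φ v) 1)
    (hψ : ∀ v, (ψ v).IsHomogeneous 1)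
    (hρ : ∀ v, MinDeg (φ v - ψ v) 2) (k : ℕ) :
    MinDeg (φ v ^ k - ψ v ^ k) (k + 1) := by
  induction k with
  | zero => simpa using minDeg_zero' _
  | succ k ih =>
    have key : φ v ^ (k+1) - ψ v ^ (k+1)
        = φ v * (φ v ^ k - ψ v ^ k) + (φ v - ψ v) * ψ v ^ k := by ring
    rw [key]
    apply minDeg_add
    · exact minDeg_mono (minDeg_mul (hφ v) ih) (by omega)
    · have h2 : MinDeg (ψ v ^ k) k := by
        simpa using minDeg_of_isHomogeneous ((hψ v).pow k)
      exact minDeg_mono (minDeg_mul (hρ v) h2) (by omega)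

lemma minDeg_prod_pow_sub (hφ : ∀ v, MinDeg (φ v) 1)
    (hψ : ∀ v, (ψ v).IsHomogeneous 1)
    (hρ : ∀ v, MinDeg (φ v - ψ v) 2) (s : Finset σ') (m : σ' → ℕ) :
    MinDeg ((∏ v ∈ s, φ v ^ m v) - ∏ v ∈ s, ψ v ^ m v) ((∑ v ∈ s, m v) + 1) := by
  classical
  induction s using Finset.induction_on with
  | empty => simpa using minDeg_zero' _
  | @insert a s hni ih =>
    rw [Finset.prod_insert hni, Finset.prod_insert hni, Finset.sum_insert hni]
    have key : φ a ^ m a * ∏ v ∈ s, φ v ^ m v - ψ a ^ m a * ∏ v ∈ s, ψ v ^ m v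
        = φ a ^ m a * ((∏ v ∈ s, φ v ^ m v) - ∏ v ∈ s, ψ v ^ m v)
          + (φ a ^ m a - ψ a ^ m a) * ∏ v ∈ s, ψ v ^ m v := by ring
    rw [key]
    apply minDeg_add
    · have := minDeg_mul (by simpa using minDeg_pow (hφ a) (m a)) ih
      exact minDeg_mono this (by omega)
    · have hpr : MinDeg (∏ v ∈ s, ψ v ^ m v) (∑ v ∈ s, m v) := by
        apply minDeg_of_isHomogeneous
        have := MvPolynomial.IsHomogeneous.prod s (fun v => ψ v ^ m v) (fun v => m v)
          (fun v _ => by simpa using (hψ v).pow (m v))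
        exact this
      exact minDeg_mono (minDeg_mul (minDeg_pow_sub hφ hψ hρ (m a)) hpr) (by omega)

lemma isHomogeneous_prod_pow (hψ : ∀ v, (ψ v).IsHomogeneous 1) (s : Finset σ') (m : σ' → ℕ) :
    (∏ v ∈ s, ψ v ^ m v).IsHomogeneous (∑ v ∈ s, m v) :=
  MvPolynomial.IsHomogeneous.prod s _ _ (fun v _ => by simpa using (hψ v).pow (m v))

lemma aeval_minDeg_decomp (hφ : ∀ v, MinDeg (φ v) 1)
    (hψ : ∀ v, (ψ v).IsHomogeneous 1)
    (hρ : ∀ v, MinDeg (φ v - ψ v) 2) {g : MvPolynomial σ' K} {e : ℕ}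
    (hg : g.IsHomogeneous e) :
    MinDeg (aeval φ g) e ∧ MinDeg (aeval φ g - aeval ψ g) (e + 1) := by
  classical
  have hsum : ∀ m ∈ g.support, (∑ v ∈ m.support, m v) = e := by
    intro m hm
    simpa [Finsupp.weight_apply, Finsupp.sum, mul_one] using hg (mem_support_iff.mp hm)
  have hrepr : g = ∑ m ∈ g.support, monomial m (coeff m g) := (support_sum_monomial_coeff g).symm
  constructor
  · conv_lhs => rw [hrepr]
    rw [map_sum]
    apply minDeg_sum
    intro m hm
    rw [aeval_monomial]
    have := minDeg_mul (a := 0) (minDeg_zero (algebraMap K (MvPolynomial σ' K) (coeff m g)))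
      (by exact minDeg_prod_pow hφ m.support m)
    rw [zero_add, hsum m hm] at this
    exact this
  · conv_lhs => rw [hrepr]
    rw [map_sum, map_sum, ← Finset.sum_sub_distrib]
    apply minDeg_sum
    intro m hm
    rw [aeval_monomial, aeval_monomial, ← mul_sub]
    have := minDeg_mul (a := 0) (minDeg_zero (algebraMap K (MvPolynomial σ' K) (coeff m g)))
      (by exact minDeg_prod_pow_sub hφ hψ hρ m.support m)
    rw [zero_add, hsum m hm] at this
    exact this

lemma aeval_isHomogeneous (hψ : ∀ v, (ψ v).IsHomogeneous 1) {g : MvPolynomial σ' K} {e : ℕ}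
    (hg : g.IsHomogeneous e) : (aeval ψ g).IsHomogeneous e := by
  simpa using hg.aeval ψ hψ

end Subst


section LU

variable {S : Type*} [CommRing S] [IsLocalRing S]

lemma isUnit_of_sub_one_mem {a : S} (h : a - 1 ∈ IsLocalRing.maximalIdeal S) : IsUnit a := by
  by_contra ha
  have h1 : a ∈ IsLocalRing.maximalIdeal S := ha
  have h2 : (1 : S) ∈ IsLocalRing.maximalIdeal S := by
    have := Ideal.sub_mem _ h1 h
    simpa using this
  exact (IsLocalRing.maximalIdeal.isMaximal S).ne_top
    (Ideal.eq_top_of_isUnit_mem _ h2 isUnit_one)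

lemma lu_exists : ∀ (n : ℕ) (M : Matrix (Fin n) (Fin n) S),
    (∀ i j, M i j - (if i = j then 1 else 0) ∈ IsLocalRing.maximalIdeal S) →
    ∃ L U : Matrix (Fin n) (Fin n) S,
      M = L * U ∧
      (∀ i j, i < j → L i j = 0) ∧ (∀ i, L i i = 1) ∧
      (∀ i j, j < i → L i j ∈ IsLocalRing.maximalIdeal S) ∧
      (∀ i j, j < i → U i j = 0) ∧
      (∀ i j, U i j - (if i = j then 1 else 0) ∈ IsLocalRing.maximalIdeal S) := by
  intro n
  induction n with
  | zero =>
    intro M _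
    exact ⟨1, 1, by ext i j; exact i.elim0, fun i => i.elim0, fun i => i.elim0,
      fun i => i.elim0, fun i => i.elim0, fun i => i.elim0⟩
  | succ n ih =>
    intro M hM
    have ha : IsUnit (M 0 0) := isUnit_of_sub_one_mem (by simpa using hM 0 0)
    obtain ⟨ai, hai1, hai2⟩ : ∃ b, M 0 0 * b = 1 ∧ b * M 0 0 = 1 :=
      ⟨↑ha.unit⁻¹, ha.mul_val_inv, ha.val_inv_mul⟩
    set N : Matrix (Fin n) (Fin n) S :=
      fun i j => M i.succ j.succ - M i.succ 0 * ai * M 0 j.succ with hN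
    have hNm : ∀ i j, N i j - (if i = j then 1 else 0) ∈ IsLocalRing.maximalIdeal S := by
      intro i j
      have h1 : M i.succ j.succ - (if i.succ = j.succ then 1 else 0)
          ∈ IsLocalRing.maximalIdeal S := hM i.succ j.succ
      rw [show (if i.succ = j.succ then (1:S) else 0) = (if i = j then 1 else 0) by
        simp [Fin.succ_inj]] at h1
      have h2 : M i.succ 0 * ai * M 0 j.succ ∈ IsLocalRing.maximalIdeal S := by
        apply Ideal.mul_mem_right
        apply Ideal.mul_mem_right
        simpa [Fin.succ_ne_zero] using hM i.succ 0
      have := Ideal.sub_mem _ h1 h2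
      convert this using 1
      rw [hN]; ring
    obtain ⟨L', U', hLU, hL1, hL2, hL3, hU1, hU2⟩ := ih N hNm
    refine ⟨Matrix.of (fun i j => Fin.cases (Fin.cases (1:S) (fun _ => 0) j)
        (fun i' => Fin.cases (M i'.succ 0 * ai) (fun j' => L' i' j') j) i),
      Matrix.of (fun i j => Fin.cases (Fin.cases (M 0 0) (fun j' => M 0 j'.succ) j)
        (fun i' => Fin.cases 0 (fun j' => U' i' j') j) i), ?_, ?_, ?_, ?_, ?_, ?_⟩
    · ext i j
      rw [Matrix.mul_apply, Fin.sum_univ_succ]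
      refine Fin.cases ?_ (fun i' => ?_) i <;> refine Fin.cases ?_ (fun j' => ?_) j <;>
        simp only [Matrix.of_apply, Fin.cases_zero, Fin.cases_succ]
      · simp
      · simp
      · simp only [mul_zero, Finset.sum_const_zero, add_zero, mul_assoc, hai2, mul_one]
      · have hprod : ∑ k : Fin n, L' i' k * U' k j' = N i' j' := by
          rw [← Matrix.mul_apply, ← hLU]
        rw [hprod, hN]
        ring
    · intro i j
      refine Fin.cases ?_ (fun i' => ?_) i <;> refine Fin.cases ?_ (fun j' => ?_) j <;>
        intro hij <;> simp only [Matrix.of_apply, Fin.cases_zero, Fin.cases_succ]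
      · exact absurd hij (lt_irrefl _)
      · exact absurd hij (Fin.not_lt_zero _)
      · exact hL1 i' j' (Fin.succ_lt_succ_iff.mp hij)
    · intro i
      refine Fin.cases ?_ (fun i' => ?_) i <;>
        simp only [Matrix.of_apply, Fin.cases_zero, Fin.cases_succ]
      exact hL2 i'
    · intro i j
      refine Fin.cases ?_ (fun i' => ?_) i <;> refine Fin.cases ?_ (fun j' => ?_) j <;>
        intro hij <;> simp only [Matrix.of_apply, Fin.cases_zero, Fin.cases_succ]
      · exact absurd hij (lt_irrefl _)
      · exact absurd hij (Fin.not_lt_zero _)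
      · exact Ideal.mul_mem_right _ _ (by simpa [Fin.succ_ne_zero] using hM i'.succ 0)
      · exact hL3 i' j' (Fin.succ_lt_succ_iff.mp hij)
    · intro i j
      refine Fin.cases ?_ (fun i' => ?_) i <;> refine Fin.cases ?_ (fun j' => ?_) j <;>
        intro hij <;> simp only [Matrix.of_apply, Fin.cases_zero, Fin.cases_succ]
      · exact absurd hij (lt_irrefl _)
      · exact absurd hij (Fin.not_lt_zero _)
      · exact hU1 i' j' (Fin.succ_lt_succ_iff.mp hij)
    · intro i j
      refine Fin.cases ?_ (fun i' => ?_) i <;> refine Fin.cases ?_ (fun j' => ?_) j <;>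
        simp only [Matrix.of_apply, Fin.cases_zero, Fin.cases_succ]
      · simpa using hM 0 0
      · rw [if_neg (Fin.succ_ne_zero j').symm]
        simpa [(Fin.succ_ne_zero j').symm] using hM 0 j'.succ
      · rw [if_neg (Fin.succ_ne_zero i')]
        simpa using Ideal.zero_mem (IsLocalRing.maximalIdeal S)
      · rw [show (if i'.succ = j'.succ then (1:S) else 0) = (if i' = j' then 1 else 0) by
          simp [Fin.succ_inj]]
        exact hU2 i' j'

end LU


section Denom

variable {K : Type} [Field K] {n : ℕ}

lemma exists_denominator_LU (Bk : Matrix (Fin n) (Fin n) (MvPolynomial (Fin n × Fin n) K))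
    (hB0 : ∀ i j, constantCoeff (Bk i j) = 0) :
    ∃ (q : MvPolynomial (Fin n × Fin n) K)
      (Yt Ut : Matrix (Fin n) (Fin n) (MvPolynomial (Fin n × Fin n) K)),
      constantCoeff q ≠ 0 ∧
      (∀ i j : Fin n, ¬ j < i → Yt i j = 0) ∧
      (∀ i j : Fin n, j < i → Ut i j = 0) ∧
      (q • (1 : Matrix (Fin n) (Fin n) (MvPolynomial (Fin n × Fin n) K)) + Yt) * Ut
        = (q * q) • ((1 : Matrix (Fin n) (Fin n) (MvPolynomial (Fin n × Fin n) K)) + Bk) ∧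
      (∀ i j, constantCoeff (Yt i j) = 0) ∧
      (∀ i j, constantCoeff (Ut i j) = if i = j then constantCoeff q else 0) := by
  classical
  set P : Ideal (MvPolynomial (Fin n × Fin n) K) :=
    RingHom.ker (constantCoeff : MvPolynomial (Fin n × Fin n) K →+* K) with hP
  haveI hPp : P.IsPrime := RingHom.ker_isPrime _
  set alg : MvPolynomial (Fin n × Fin n) K →+* Localization.AtPrime P :=
    algebraMap (MvPolynomial (Fin n × Fin n) K) (Localization.AtPrime P) with halg
  have hinj : Function.Injective alg := by
    apply IsLocalization.injective (Localization.AtPrime P) (M := P.primeCompl)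
    apply le_nonZeroDivisors_of_noZeroDivisors
    intro h0
    exact h0 (by simp [hP, RingHom.mem_ker])
  have hmem : ∀ r : MvPolynomial (Fin n × Fin n) K,
      alg r ∈ IsLocalRing.maximalIdeal (Localization.AtPrime P) ↔ r ∈ P := fun r =>
    IsLocalization.AtPrime.to_map_mem_maximal_iff (Localization.AtPrime P) P r
  set MR : Matrix (Fin n) (Fin n) (MvPolynomial (Fin n × Fin n) K) := 1 + Bk with hMR
  set MS : Matrix (Fin n) (Fin n) (Localization.AtPrime P) := MR.map alg with hMS
  have hMm : ∀ i j, MS i j - (if i = j then 1 else 0)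
      ∈ IsLocalRing.maximalIdeal (Localization.AtPrime P) := by
    intro i j
    have heq : MS i j - (if i = j then 1 else 0) = alg (Bk i j) := by
      rw [hMS, Matrix.map_apply, hMR, Matrix.add_apply, Matrix.one_apply, map_add]
      split_ifs <;> simp
    rw [heq, hmem]
    exact RingHom.mem_ker.mpr (hB0 i j)
  obtain ⟨L, U, hLU, hL1, hL2, hL3, hU1, hU2⟩ := lu_exists n MS hMm
  obtain ⟨qc, hqc⟩ := IsLocalization.exist_integer_multiples_of_finite (P.primeCompl)
    (Sum.elim (fun p : Fin n × Fin n => L p.1 p.2) (fun p : Fin n × Fin n => U p.1 p.2))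
  set q : MvPolynomial (Fin n × Fin n) K := (qc : MvPolynomial (Fin n × Fin n) K) with hq
  have hq0 : constantCoeff q ≠ 0 := fun h => qc.2 (RingHom.mem_ker.mpr h)
  choose Lr hLr using fun p : Fin n × Fin n => hqc (Sum.inl p)
  choose Ur hUr using fun p : Fin n × Fin n => hqc (Sum.inr p)
  have hLr' : ∀ i j, alg (Lr (i, j)) = alg q * L i j := by
    intro i j
    have := hLr (i, j)
    rwa [Sum.elim_inl, Algebra.smul_def] at this
  have hUr' : ∀ i j, alg (Ur (i, j)) = alg q * U i j := by
    intro i j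
    have := hUr (i, j)
    rwa [Sum.elim_inr, Algebra.smul_def] at this
  set Lt : Matrix (Fin n) (Fin n) (MvPolynomial (Fin n × Fin n) K) :=
    Matrix.of fun i j => Lr (i, j) with hLt
  set Ut : Matrix (Fin n) (Fin n) (MvPolynomial (Fin n × Fin n) K) :=
    Matrix.of fun i j => Ur (i, j) with hUt
  have hLt0 : ∀ i j, i < j → Lt i j = 0 := by
    intro i j hij
    apply hinj
    rw [hLt, Matrix.of_apply, hLr' i j, hL1 i j hij, mul_zero, map_zero]
  have hLtd : ∀ i, Lt i i = q := by
    intro i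
    apply hinj
    rw [hLt, Matrix.of_apply, hLr' i i, hL2 i, mul_one]
  have hLtm : ∀ i j, j < i → constantCoeff (Lt i j) = 0 := by
    intro i j hij
    have hmem2 : Lt i j ∈ P := by
      rw [← hmem, hLt, Matrix.of_apply, hLr' i j]
      exact Ideal.mul_mem_left _ _ (hL3 i j hij)
    exact RingHom.mem_ker.mp hmem2
  have hUt1 : ∀ i j, j < i → Ut i j = 0 := by
    intro i j hij
    apply hinj
    rw [hUt, Matrix.of_apply, hUr' i j, hU1 i j hij, mul_zero, map_zero]
  have hUt0 : ∀ i j, constantCoeff (Ut i j) = if i = j then constantCoeff q else 0 := by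
    intro i j
    have hmem2 : Ut i j - (if i = j then q else 0) ∈ P := by
      rw [← hmem, map_sub, hUt, Matrix.of_apply, hUr' i j]
      have heq : alg (if i = j then q else 0) = alg q * (if i = j then 1 else 0) := by
        split_ifs <;> simp
      rw [heq, ← mul_sub]
      exact Ideal.mul_mem_left _ _ (hU2 i j)
    have h2 : constantCoeff (Ut i j - (if i = j then q else 0)) = 0 :=
      RingHom.mem_ker.mp hmem2
    rw [map_sub, sub_eq_zero] at h2
    rw [h2]
    split_ifs <;> simp
  have hprod : Lt * Ut = (q * q) • MR := by
    apply Matrix.ext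
    intro i j
    apply hinj
    have e1 : alg ((Lt * Ut) i j) = alg q * alg q * ((L * U) i j) := by
      rw [Matrix.mul_apply, map_sum, Matrix.mul_apply, Finset.mul_sum]
      apply Finset.sum_congr rfl
      intro k _
      rw [_root_.map_mul, hLt, hUt, Matrix.of_apply, Matrix.of_apply, hLr', hUr']
      ring
    have e2 : alg (((q * q) • MR) i j) = alg q * alg q * ((L * U) i j) := by
      rw [Matrix.smul_apply, smul_eq_mul, _root_.map_mul, _root_.map_mul, ← hLU]
      have : MS i j = alg (MR i j) := by rw [hMS, Matrix.map_apply]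
      rw [this]
    rw [e1, e2]
  have hYup : ∀ i j, ¬ j < i → (Lt - q • 1) i j = 0 := by
    intro i j hij
    rcases eq_or_lt_of_le (not_lt.mp hij) with h | h
    · rw [Matrix.sub_apply, Matrix.smul_apply, Matrix.one_apply]
      cases h
      rw [hLtd, if_pos rfl, smul_eq_mul, mul_one, sub_self]
    · rw [Matrix.sub_apply, Matrix.smul_apply, Matrix.one_apply, if_neg (Fin.ne_of_lt h),
        hLt0 i j h, smul_eq_mul, mul_zero, sub_zero]
  have hY0 : ∀ i j, constantCoeff ((Lt - q • 1) i j) = 0 := by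
    intro i j
    by_cases hij : j < i
    · rw [Matrix.sub_apply, Matrix.smul_apply, Matrix.one_apply,
        if_neg (Fin.ne_of_lt hij).symm, smul_eq_mul, mul_zero, sub_zero]
      exact hLtm i j hij
    · rw [hYup i j hij, map_zero]
  refine ⟨q, Lt - q • 1, Ut, hq0, hYup, hUt1, ?_, hY0, hUt0⟩
  rw [show q • (1 : Matrix (Fin n) (Fin n) (MvPolynomial (Fin n × Fin n) K)) + (Lt - q • 1)
    = Lt by rw [add_comm, sub_add_cancel], hprod, hMR]

end Denom


section CompOne

variable {K : Type} [Field K] {n : ℕ}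

lemma comp_one_Yt {Bk Yt Ut : Matrix (Fin n) (Fin n) (MvPolynomial (Fin n × Fin n) K)}
    {q : MvPolynomial (Fin n × Fin n) K}
    (hBhom : ∀ i j, (Bk i j).IsHomogeneous 1)
    (hq0 : constantCoeff q ≠ 0)
    (hUlow : ∀ i j : Fin n, j < i → Ut i j = 0)
    (hEq : (q • (1 : Matrix (Fin n) (Fin n) (MvPolynomial (Fin n × Fin n) K)) + Yt) * Ut
        = (q * q) • ((1 : Matrix (Fin n) (Fin n) (MvPolynomial (Fin n × Fin n) K)) + Bk))
    (hY0 : ∀ i j, constantCoeff (Yt i j) = 0)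
    (hU0 : ∀ i j, constantCoeff (Ut i j) = if i = j then constantCoeff q else 0) :
    ∀ i j : Fin n, j < i →
      homogeneousComponent 1 (Yt i j) = C (constantCoeff q) * Bk i j := by
  intro i j hij
  have hne : i ≠ j := (Fin.ne_of_lt hij).symm
  set A : Matrix (Fin n) (Fin n) (MvPolynomial (Fin n × Fin n) K) := q • 1 + Yt with hA
  have hent : ∑ k, A i k * Ut k j = (q * q) * Bk i j := by
    have h0 := Matrix.ext_iff.mpr hEq i j
    rw [Matrix.mul_apply] at h0
    rwa [Matrix.smul_apply, smul_eq_mul, Matrix.add_apply, Matrix.one_apply, if_neg hne,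
      zero_add] at h0
  have hcomp := congrArg (homogeneousComponent 1) hent
  rw [map_sum, homogeneousComponent_mul_of_isHomogeneous (hBhom i j)] at hcomp
  have hc2 : ∀ k, constantCoeff (A i k) = if i = k then constantCoeff q else 0 := by
    intro k
    rw [hA, Matrix.add_apply, Matrix.smul_apply, Matrix.one_apply, smul_eq_mul, map_add,
      hY0, add_zero]
    split_ifs <;> simp
  have hterm : ∀ k, homogeneousComponent 1 (A i k * Ut k j)
      = (if k = j then C (constantCoeff q) * homogeneousComponent 1 (A i k) else 0)
        + (if i = k then C (constantCoeff q) * homogeneousComponent 1 (Ut k j) else 0) := by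
    intro k
    rw [comp_one_mul, hU0 k j, hc2 k]
    split_ifs <;> simp
  rw [Finset.sum_congr rfl (fun k _ => hterm k), Finset.sum_add_distrib] at hcomp
  simp only [Finset.sum_ite_eq', Finset.sum_ite_eq, Finset.mem_univ, if_true] at hcomp
  rw [hUlow i j hij, map_zero, mul_zero, add_zero] at hcomp
  have hAij : A i j = Yt i j := by
    rw [hA, Matrix.add_apply, Matrix.smul_apply, Matrix.one_apply, if_neg hne, smul_eq_mul,
      mul_zero, zero_add]
  rw [hAij, _root_.map_mul] at hcomp
  have hCne : (C (constantCoeff q) : MvPolynomial (Fin n × Fin n) K) ≠ 0 := by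
    intro h
    exact hq0 (by simpa using congrArg constantCoeff h)
  apply mul_left_cancel₀ hCne
  rw [hcomp, C_mul]
  ring

end CompOne

section MatK

variable {K : Type} [Field K] {n : ℕ}

lemma upperB_mul {A B : Matrix (Fin n) (Fin n) K} (hA : A ∈ upperB K n) (hB : B ∈ upperB K n) :
    A * B ∈ upperB K n := by
  refine ⟨hA.1.mul hB.1, fun i j hij => ?_⟩
  rw [Matrix.mul_apply]
  apply Finset.sum_eq_zero
  intro k _
  rcases le_or_gt k j with h | h
  · rw [hA.2 i k (lt_of_le_of_lt h hij), zero_mul]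
  · rw [hB.2 k j h, mul_zero]

lemma upperB_inv {A : Matrix (Fin n) (Fin n) K} (hA : A ∈ upperB K n) : A⁻¹ ∈ upperB K n := by
  have hdet : IsUnit A.det := (Matrix.isUnit_iff_isUnit_det A).mp hA.1
  constructor
  · rw [Matrix.isUnit_iff_isUnit_det, Matrix.det_nonsing_inv]
    exact hdet.ringInverse
  · haveI := hA.1.invertible
    intro i j hij
    exact Matrix.blockTriangular_inv_of_blockTriangular (fun a b hab => hA.2 a b hab) hij

lemma upperB_smul {A : Matrix (Fin n) (Fin n) K} (hA : A ∈ upperB K n) {c : K} (hc : c ≠ 0) :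
    c • A ∈ upperB K n := by
  constructor
  · rw [Matrix.isUnit_iff_isUnit_det, Matrix.det_smul]
    exact ((isUnit_iff_ne_zero.mpr (pow_ne_zero _ hc)).mul
      ((Matrix.isUnit_iff_isUnit_det A).mp hA.1))
  · intro i j hij
    rw [Matrix.smul_apply, hA.2 i j hij, smul_zero]

lemma zClosure_stable {w : Equiv.Perm (Fin n)} {A C : Matrix (Fin n) (Fin n) K}
    (hA : A ∈ upperB K n) (hC : C ∈ upperB K n) {m : Matrix (Fin n) (Fin n) K}
    (hm : m ∈ zClosure (bruhatCell w)) :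
    A * m * C ∈ zClosure (bruhatCell w) := by
  intro f hf
  set g := aeval (fun v : Fin n × Fin n =>
    ∑ k, ∑ l, MvPolynomial.C (A v.1 k) * X (k, l) * MvPolynomial.C (C l v.2)) f with hg
  have key : ∀ t : Matrix (Fin n) (Fin n) K, evalMat t g = evalMat (A * t * C) f := by
    intro t
    rw [hg, evalMat, evalMat, eval_aeval']
    have hpt : ∀ v : Fin n × Fin n, eval (fun p : Fin n × Fin n => t p.1 p.2)
        (∑ k, ∑ l, MvPolynomial.C (A v.1 k) * X (k, l) * MvPolynomial.C (C l v.2))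
        = (A * t * C) v.1 v.2 := by
      intro v
      simp only [map_sum, _root_.map_mul, eval_C, eval_X]
      rw [Matrix.mul_apply]
      simp_rw [Matrix.mul_apply, Finset.sum_mul]
      rw [Finset.sum_comm]
    simp only [hpt]
  have hgz : evalMat m g = 0 := by
    apply hm
    intro t ht
    rw [key t]
    apply hf
    obtain ⟨b₁, hb₁, b₂, hb₂, rfl⟩ := ht
    refine ⟨A * b₁, upperB_mul hA hb₁, b₂ * C, upperB_mul hb₂ hC, by simp only [mul_assoc]⟩
  rw [key m] at hgz
  exact hgz

end MatK

end SchubertTC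

open SchubertTC in
theorem tangentCone_coadjoint_invariant' {K : Type} [Field K]
    (n : ℕ) (w : Equiv.Perm (Fin n)) (b : Matrix (Fin n) (Fin n) K)
    (hb : b ∈ upperB K n) (x : Matrix (Fin n) (Fin n) K)
    (hx : x ∈ tangentCone (K := K) w) :
    (Matrix.of fun i j => if j < i then (b * x * b⁻¹) i j else 0) ∈
      tangentCone (K := K) w := by
  classical
  obtain ⟨hxlow, hxmain⟩ := hx
  have hbdet : IsUnit b.det := (Matrix.isUnit_iff_isUnit_det b).mp hb.1
  set y : Matrix (Fin n) (Fin n) K :=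
    Matrix.of (fun i j => if j < i then (b * x * b⁻¹) i j else 0) with hy
  refine ⟨fun i j hij => by rw [hy, Matrix.of_apply, if_neg (not_lt.mpr hij)], ?_⟩
  intro f hf d hd hdne
  set Xlow : Matrix (Fin n) (Fin n) (MvPolynomial (Fin n × Fin n) K) :=
    Matrix.of (fun i j => if j < i then (X (i, j) : MvPolynomial (Fin n × Fin n) K) else 0)
    with hXlow
  set Bk : Matrix (Fin n) (Fin n) (MvPolynomial (Fin n × Fin n) K) :=
    (b.map MvPolynomial.C) * Xlow * ((b⁻¹).map MvPolynomial.C) with hBk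
  have hXlow0 : ∀ i j, constantCoeff (Xlow i j) = 0 := by
    intro i j
    rw [hXlow, Matrix.of_apply]
    split_ifs <;> simp
  have hB0 : ∀ i j, constantCoeff (Bk i j) = 0 := by
    intro i j
    rw [hBk]
    simp only [Matrix.mul_apply, Matrix.map_apply, map_sum, _root_.map_mul, constantCoeff_C,
      hXlow0, mul_zero, zero_mul, Finset.sum_const_zero]
  have hXlowhom : ∀ i j, (Xlow i j).IsHomogeneous 1 := by
    intro i j
    rw [hXlow, Matrix.of_apply]
    split_ifs
    · exact isHomogeneous_X _ _
    · exact (mem_homogeneousSubmodule _ _).mp (Submodule.zero_mem _)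
  have hBhom : ∀ i j, (Bk i j).IsHomogeneous 1 := by
    intro i j
    rw [hBk]
    rw [Matrix.mul_apply]
    apply MvPolynomial.IsHomogeneous.sum
    intro k _
    rw [Matrix.mul_apply, Finset.sum_mul]
    apply MvPolynomial.IsHomogeneous.sum
    intro l _
    have : (Matrix.map b ⇑MvPolynomial.C i l * Xlow l k * Matrix.map b⁻¹ ⇑MvPolynomial.C k j)
        = MvPolynomial.C (b i l) * Xlow l k * MvPolynomial.C (b⁻¹ k j) := by
      rw [Matrix.map_apply, Matrix.map_apply]
    rw [this]
    simpa using ((isHomogeneous_C _ (b i l)).mul (hXlowhom l k)).mul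
      (isHomogeneous_C _ (b⁻¹ k j))
  have hBeval : ∀ s : Matrix (Fin n) (Fin n) K, (∀ i j, i ≤ j → s i j = 0) →
      ∀ i j, eval (fun p : Fin n × Fin n => s p.1 p.2) (Bk i j) = (b * s * b⁻¹) i j := by
    intro s hs i j
    have hXe : ∀ l k, eval (fun p : Fin n × Fin n => s p.1 p.2) (Xlow l k) = s l k := by
      intro l k
      rw [hXlow, Matrix.of_apply]
      split_ifs with hlk
      · rw [eval_X]
      · rw [map_zero, hs l k (not_lt.mp hlk)]
    rw [hBk]
    simp only [Matrix.mul_apply, Matrix.map_apply, map_sum, _root_.map_mul, eval_C, hXe,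
      Finset.sum_mul]
  obtain ⟨q, Yt, Ut, hq0, hYup, hUlow, hEq, hY0, hU0⟩ := exists_denominator_LU Bk hB0
  have hY1 := comp_one_Yt hBhom hq0 hUlow hEq hY0 hU0
  set q0 := constantCoeff q with hq0d
  set T := f.totalDegree with hT
  have hdT : d ≤ T := by
    by_contra hcon
    push_neg at hcon
    exact hdne (homogeneousComponent_eq_zero _ _ hcon)
  set φv : Fin n × Fin n → MvPolynomial (Fin n × Fin n) K :=
    fun v => if v.2 < v.1 then Yt v.1 v.2 else 0 with hφv
  set ψv : Fin n × Fin n → MvPolynomial (Fin n × Fin n) K :=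
    fun v => if v.2 < v.1 then MvPolynomial.C q0 * Bk v.1 v.2 else 0 with hψv
  have hφva : ∀ v, φv v = if v.2 < v.1 then Yt v.1 v.2 else 0 := fun _ => rfl
  have hψva : ∀ v, ψv v = if v.2 < v.1 then MvPolynomial.C q0 * Bk v.1 v.2 else 0 :=
    fun _ => rfl
  have hφ1 : ∀ v, MinDeg (φv v) 1 := by
    intro v
    apply minDeg_of_constantCoeff
    rw [hφva]
    split_ifs
    · exact hY0 _ _
    · exact map_zero _
  have hψhom : ∀ v, (ψv v).IsHomogeneous 1 := by
    intro v
    rw [hψva]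
    split_ifs
    · simpa using (isHomogeneous_C _ q0).mul (hBhom v.1 v.2)
    · exact (mem_homogeneousSubmodule _ _).mp (Submodule.zero_mem _)
  have hρ : ∀ v, MinDeg (φv v - ψv v) 2 := by
    intro v
    apply minDeg_of_components
    intro e' he'
    interval_cases e'
    · rw [homogeneousComponent_zero]
      have hcc : constantCoeff (φv v - ψv v) = 0 := by
        rw [map_sub, hφva, hψva]
        by_cases hv : v.2 < v.1
        · rw [if_pos hv, if_pos hv, hY0, _root_.map_mul, constantCoeff_C, hB0, mul_zero,
            sub_zero]
        · rw [if_neg hv, if_neg hv]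
          simp
      rw [constantCoeff_eq] at hcc
      rw [hcc, map_zero]
    · rw [map_sub, hφva, hψva]
      by_cases hv : v.2 < v.1
      · rw [if_pos hv, if_pos hv, hY1 v.1 v.2 hv, homogeneousComponent_C_mul,
          comp_eq_self_of_isHomogeneous (hBhom v.1 v.2), sub_self]
      · rw [if_neg hv, if_neg hv, map_zero, sub_zero]
  set h : MvPolynomial (Fin n × Fin n) K :=
    ∑ e ∈ Finset.range (T+1), q ^ (T+1-e) * (aeval φv (homogeneousComponent e f)) with hh
  -- h vanishes on the affine Schubert variety
  have hvan : ∀ s ∈ schubertAffine w, evalMat s h = 0 := by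
    intro s hs
    obtain ⟨hslow, hsZ⟩ := hs
    have hslow' : ∀ i j, i ≤ j → s i j = 0 := hslow
    set sfun : (Fin n × Fin n) → K := fun p => s p.1 p.2 with hsfun
    set c : K := eval sfun q with hcdef
    have hterm : ∀ e, eval sfun (q ^ (T+1-e) * aeval φv (homogeneousComponent e f))
        = c ^ (T+1-e) * eval (fun v => eval sfun (φv v)) (homogeneousComponent e f) := by
      intro e
      rw [_root_.map_mul, map_pow, eval_aeval']
    have hsum0 : evalMat s h = ∑ e ∈ Finset.range (T+1),
        c ^ (T+1-e) * eval (fun v => eval sfun (φv v)) (homogeneousComponent e f) := by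
      rw [evalMat, hh, map_sum]
      exact Finset.sum_congr rfl (fun e _ => hterm e)
    by_cases hcz : c = 0
    · rw [hsum0]
      apply Finset.sum_eq_zero
      intro e he
      rw [hcz, zero_pow (by have := Finset.mem_range.mp he; omega), zero_mul]
    · -- the interesting case
      set Yh : Matrix (Fin n) (Fin n) K := Matrix.of fun i j => eval sfun (Yt i j) with hYh
      set Uh : Matrix (Fin n) (Fin n) K := Matrix.of fun i j => eval sfun (Ut i j) with hUh
      have hEqK : (c • (1 : Matrix (Fin n) (Fin n) K) + Yh) * Uh
          = (c * c) • ((1 : Matrix (Fin n) (Fin n) K) + b * s * b⁻¹) := by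
        apply Matrix.ext
        intro i j
        have h0 := congrArg (eval sfun) (Matrix.ext_iff.mpr hEq i j)
        rw [Matrix.mul_apply, map_sum] at h0
        rw [Matrix.mul_apply]
        have hL : ∀ k, eval sfun (((q • (1 : Matrix (Fin n) (Fin n)
            (MvPolynomial (Fin n × Fin n) K)) + Yt)) i k * Ut k j)
            = (c • (1 : Matrix (Fin n) (Fin n) K) + Yh) i k * Uh k j := by
          intro k
          rw [_root_.map_mul, Matrix.add_apply, Matrix.smul_apply, Matrix.one_apply, map_add,
            Matrix.add_apply, Matrix.smul_apply, Matrix.one_apply, hYh, Matrix.of_apply,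
            hUh, Matrix.of_apply]
          congr 1
          congr 1
          rw [smul_eq_mul, smul_eq_mul]
          split_ifs <;> simp [hcdef]
        rw [Finset.sum_congr rfl (fun k _ => hL k)] at h0
        rw [h0, Matrix.smul_apply, Matrix.smul_apply, smul_eq_mul, smul_eq_mul,
          _root_.map_mul, _root_.map_mul]
        congr 1
        rw [Matrix.add_apply, Matrix.add_apply, Matrix.one_apply, Matrix.one_apply, map_add,
          hBeval s hslow' i j]
        congr 1
        split_ifs <;> simp
      have hbs : (1 : Matrix (Fin n) (Fin n) K) + b * s * b⁻¹ = b * (1 + s) * b⁻¹ := by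
        rw [Matrix.mul_add, Matrix.mul_one, Matrix.add_mul, Matrix.mul_nonsing_inv _ hbdet]
      have hdet1 : ((1 : Matrix (Fin n) (Fin n) K) + b * s * b⁻¹).det = 1 := by
        have hdet1s : ((1 : Matrix (Fin n) (Fin n) K) + s).det = 1 := by
          rw [Matrix.det_of_lowerTriangular]
          · apply Finset.prod_eq_one
            intro i _
            rw [Matrix.add_apply, Matrix.one_apply_eq, hslow' i i le_rfl, add_zero]
          · intro i j hij
            have hij' : i < j := hij
            rw [Matrix.add_apply, Matrix.one_apply_ne (Fin.ne_of_lt hij'),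
              hslow' i j (le_of_lt hij'), add_zero]
        rw [hbs, Matrix.det_mul, Matrix.det_mul, Matrix.det_nonsing_inv, hdet1s, mul_one,
          Ring.mul_inverse_cancel _ hbdet]
      have hdetL : (c • (1 : Matrix (Fin n) (Fin n) K) + Yh).det = c ^ n := by
        rw [Matrix.det_of_lowerTriangular]
        · rw [Finset.prod_congr rfl (fun i _ =>
            show (c • (1 : Matrix (Fin n) (Fin n) K) + Yh) i i = c by
              rw [Matrix.add_apply, Matrix.smul_apply, Matrix.one_apply_eq, smul_eq_mul,
                mul_one, hYh, Matrix.of_apply, hYup i i (lt_irrefl i), map_zero, add_zero])]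
          rw [Finset.prod_const, Finset.card_univ, Fintype.card_fin]
        · intro i j hij
          have hij' : i < j := hij
          rw [Matrix.add_apply, Matrix.smul_apply, Matrix.one_apply_ne (Fin.ne_of_lt hij'),
            smul_eq_mul, mul_zero, hYh, Matrix.of_apply, hYup i j (by omega), map_zero,
            add_zero]
      have hdetU : Uh.det = c ^ n := by
        have hdet := congrArg Matrix.det hEqK
        rw [Matrix.det_mul, hdetL, Matrix.det_smul, hdet1, mul_one, Fintype.card_fin,
          mul_pow] at hdet
        exact mul_left_cancel₀ (pow_ne_zero _ hcz) hdet
      have hUdet : IsUnit Uh.det := by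
        rw [hdetU]
        exact isUnit_iff_ne_zero.mpr (pow_ne_zero _ hcz)
      have hUhupper : ∀ i j : Fin n, j < i → Uh i j = 0 := by
        intro i j hij
        rw [hUh, Matrix.of_apply, hUlow i j hij, map_zero]
      set y' : Matrix (Fin n) (Fin n) K :=
        Matrix.of fun i j => if j < i then c⁻¹ * eval sfun (Yt i j) else 0 with hy'
      have hy'eq : (1 : Matrix (Fin n) (Fin n) K) + y'
          = c⁻¹ • (c • (1 : Matrix (Fin n) (Fin n) K) + Yh) := by
        apply Matrix.ext
        intro i j
        rw [Matrix.add_apply, Matrix.smul_apply, Matrix.add_apply, Matrix.smul_apply,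
          Matrix.one_apply, hy', Matrix.of_apply, hYh, Matrix.of_apply,
          smul_eq_mul, smul_eq_mul]
        by_cases hij : j < i
        · rw [if_neg (Fin.ne_of_lt hij).symm, if_pos hij]
          ring
        · rw [if_neg hij, hYup i j hij, map_zero, add_zero, add_zero]
          split_ifs with hij2
          · rw [mul_one, inv_mul_cancel₀ hcz]
          · rw [mul_zero, mul_zero]
      have hy'Z : (1 : Matrix (Fin n) (Fin n) K) + y' ∈ zClosure (bruhatCell w) := by
        have hA : (c • (1 : Matrix (Fin n) (Fin n) K) + Yh)
            = ((c * c) • ((1 : Matrix (Fin n) (Fin n) K) + b * s * b⁻¹)) * Uh⁻¹ := by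
          rw [← hEqK, Matrix.mul_nonsing_inv_cancel_right _ _ hUdet]
        have hstep : (1 : Matrix (Fin n) (Fin n) K) + y'
            = b * (1 + s) * (b⁻¹ * (c • Uh⁻¹)) := by
          rw [hy'eq, hA, Matrix.smul_mul, smul_smul, inv_mul_cancel_left₀ hcz, hbs,
            ← Matrix.mul_smul, mul_assoc, mul_assoc]
        rw [hstep]
        refine zClosure_stable hb ?_ hsZ
        refine upperB_mul (upperB_inv hb) (upperB_smul (upperB_inv ⟨?_, hUhupper⟩) hcz)
        exact (Matrix.isUnit_iff_isUnit_det Uh).mpr hUdet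
      have hy'mem : y' ∈ schubertAffine w := by
        refine ⟨fun i j hij => ?_, hy'Z⟩
        rw [hy', Matrix.of_apply, if_neg (not_lt.mpr hij)]
      have hfy' : eval (fun p : Fin n × Fin n => y' p.1 p.2) f = 0 := hf y' hy'mem
      have hptv : (fun v : Fin n × Fin n => eval sfun (φv v))
          = fun v : Fin n × Fin n => c * (fun p : Fin n × Fin n => y' p.1 p.2) v := by
        funext v
        show eval sfun (φv v) = c * y' v.1 v.2
        rw [hφva]
        split_ifs with hv
        · rw [hy', Matrix.of_apply, if_pos hv, ← mul_assoc, mul_inv_cancel₀ hcz, one_mul]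
        · rw [hy', Matrix.of_apply, if_neg hv, map_zero, mul_zero]
      rw [hsum0]
      have hptv2 : ∀ e ∈ Finset.range (T+1),
          c ^ (T+1-e) * eval (fun v => eval sfun (φv v)) (homogeneousComponent e f)
          = c ^ (T+1) * eval (fun p : Fin n × Fin n => y' p.1 p.2)
              (homogeneousComponent e f) := by
        intro e he
        rw [hptv, eval_smul_of_isHomogeneous (homogeneousComponent_isHomogeneous e f) c _,
          ← mul_assoc, ← pow_add]
        congr 2
        have := Finset.mem_range.mp he
        omega
      rw [Finset.sum_congr rfl hptv2, ← Finset.mul_sum, ← map_sum]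
      rw [show ∑ e ∈ Finset.range (T+1), homogeneousComponent e f = f from
        sum_homogeneousComponent f]
      rw [hfy', mul_zero]
  -- low homogeneous components of h vanish
  have hlow : ∀ e' < d, homogeneousComponent e' h = 0 := by
    intro e' he'
    rw [hh, map_sum]
    apply Finset.sum_eq_zero
    intro e _
    by_cases hed : e < d
    · rw [hd e hed, map_zero, mul_zero, map_zero]
    · push_neg at hed
      apply minDeg_homogeneousComponent_eq_zero (e := e) ?_ (lt_of_lt_of_le he' hed)
      have := minDeg_mul (minDeg_zero (q ^ (T+1-e)))
        ((aeval_minDeg_decomp hφ1 hψhom hρ (homogeneousComponent_isHomogeneous e f)).1)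
      simpa using this
  -- the degree d component of h
  have hcompd : homogeneousComponent d h
      = MvPolynomial.C (q0 ^ (T+1-d)) * aeval ψv (homogeneousComponent d f) := by
    rw [hh, map_sum]
    rw [Finset.sum_eq_single d]
    · obtain ⟨h1, h2⟩ := aeval_minDeg_decomp hφ1 hψhom hρ
        (homogeneousComponent_isHomogeneous d f)
      have hsplit : q ^ (T+1-d) * aeval φv (homogeneousComponent d f)
          = q ^ (T+1-d) * aeval ψv (homogeneousComponent d f)
            + q ^ (T+1-d) * (aeval φv (homogeneousComponent d f)
              - aeval ψv (homogeneousComponent d f)) := by ring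
      rw [hsplit, map_add]
      have hz2 : homogeneousComponent d (q ^ (T+1-d) * (aeval φv (homogeneousComponent d f)
          - aeval ψv (homogeneousComponent d f))) = 0 := by
        apply minDeg_homogeneousComponent_eq_zero (e := d + 1) ?_ (by omega)
        have := minDeg_mul (minDeg_zero (q ^ (T+1-d))) h2
        simpa using this
      rw [hz2, add_zero,
        homogeneousComponent_mul_of_isHomogeneous
          (aeval_isHomogeneous hψhom (homogeneousComponent_isHomogeneous d f)),
        map_pow]
    · intro e he hne
      rcases lt_or_gt_of_ne hne with hlt | hgt
      · rw [hd e hlt, map_zero, mul_zero, map_zero]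
      · apply minDeg_homogeneousComponent_eq_zero (e := e) ?_ hgt
        have := minDeg_mul (minDeg_zero (q ^ (T+1-e)))
          ((aeval_minDeg_decomp hφ1 hψhom hρ (homogeneousComponent_isHomogeneous e f)).1)
        simpa using this
    · intro habs
      exact absurd (Finset.mem_range.mpr (by omega)) habs
  -- conclude
  have hgoal0 : eval (fun p : Fin n × Fin n => x p.1 p.2)
      (aeval ψv (homogeneousComponent d f)) = 0 := by
    by_cases hz : homogeneousComponent d h = 0
    · rw [hcompd] at hz
      rcases mul_eq_zero.mp hz with hc | hc
      · exfalso
        have : (q0 : K) ^ (T+1-d) = 0 := by simpa using congrArg constantCoeff hc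
        exact pow_ne_zero _ hq0 this
      · rw [hc, map_zero]
    · have hzz := hxmain h hvan d hlow hz
      rw [evalMat, hcompd, _root_.map_mul, eval_C] at hzz
      exact (mul_eq_zero.mp hzz).resolve_left (pow_ne_zero _ hq0)
  rw [eval_aeval'] at hgoal0
  have hptx : (fun v : Fin n × Fin n => eval (fun p : Fin n × Fin n => x p.1 p.2) (ψv v))
      = fun v : Fin n × Fin n => q0 * (fun p : Fin n × Fin n => y p.1 p.2) v := by
    funext v
    show eval (fun p : Fin n × Fin n => x p.1 p.2) (ψv v) = q0 * y v.1 v.2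
    rw [hψva, hy]
    split_ifs with hv
    · rw [_root_.map_mul, eval_C, hBeval x hxlow v.1 v.2, Matrix.of_apply, if_pos hv]
    · rw [map_zero, Matrix.of_apply, if_neg hv, mul_zero]
  rw [hptx, eval_smul_of_isHomogeneous (homogeneousComponent_isHomogeneous d f) q0 _]
    at hgoal0
  have hfin := (mul_eq_zero.mp hgoal0).resolve_left (pow_ne_zero _ hq0)
  exact hfin

/-- Each tangent cone `C_w` is invariant under the coadjoint action of `B` on
`n^* ≅ n₋`: for every invertible upper triangular `b` and every `x ∈ C_w`, the
strictly lower triangular part of `b x b⁻¹` lies again in `C_w`. -/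
theorem tangentCone_coadjoint_invariant {K : Type} [Field K] [IsAlgClosed K] [CharZero K]
    (n : ℕ) (w : Equiv.Perm (Fin n)) (b : Matrix (Fin n) (Fin n) K)
    (hb : b ∈ upperB K n) (x : Matrix (Fin n) (Fin n) K)
    (hx : x ∈ tangentCone (K := K) w) :
    (Matrix.of fun i j => if j < i then (b * x * b⁻¹) i j else 0) ∈
      tangentCone (K := K) w := by
  exact tangentCone_coadjoint_invariant' n w b hb x hx
end
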